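/- arXiv:2503.15771 — 12 statements merged into one kernel-verified Lean document; each statement's English description precedes it below -/
import Mathlib

section
/- Let G = (V, E) be a finite undirected graph with a labeling λ : E → Finset ℕ, and let D be the strict reachability relation of the temporal graph (G, λ) (i.e., u can reach v iff there is a path in G whose edges carry strictly increasing labels taken from their label sets). If {u,v} and {v,w} are edges of G with λ({u,v}) ≠ ∅ and λ({v,w}) ≠ ∅, and neither (u,w) nor (w,u) is in D, then there exists a single label α such that λ({u,v}) = λ({v,w}) = {α}. -/
/-- Strict temporal reachability: `SReach lab u v t` means there is a walk from `u` to `v`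
whose steps carry strictly increasing labels, arriving at time `t`. -/
inductive SReach {V : Type*} (lab : V → V → Finset ℕ) : V → V → ℕ → Prop
  | single {u v : V} {t : ℕ} (h : t ∈ lab u v) : SReach lab u v t
  | cons {u v w : V} {t t' : ℕ} (h : SReach lab u v t) (h' : t' ∈ lab v w) (hlt : t < t') :
      SReach lab u w t'

/-- `u` can reach `v` via a strict temporal path. -/
def StrictReachable {V : Type*} (lab : V → V → Finset ℕ) (u v : V) : Prop :=
  ∃ t, SReach lab u v t

/-- Non-strict temporal reachability: labels are non-decreasing along the walk. -/
inductive NSReach {V : Type*} (lab : V → V → Finset ℕ) : V → V → ℕ → Prop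
  | single {u v : V} {t : ℕ} (h : t ∈ lab u v) : NSReach lab u v t
  | cons {u v w : V} {t t' : ℕ} (h : NSReach lab u v t) (h' : t' ∈ lab v w) (hle : t ≤ t') :
      NSReach lab u w t'

/-- `u` can reach `v` via a non-strict temporal path. -/
def NonStrictReachable {V : Type*} (lab : V → V → Finset ℕ) (u v : V) : Prop :=
  ∃ t, NSReach lab u v t

theorem StrictReachable.of_lt {V : Type*} {lab : V → V → Finset ℕ} {u v w : V} {a b : ℕ}
    (ha : a ∈ lab u v) (hb : b ∈ lab v w) (hab : a < b) : StrictReachable lab u w :=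
  ⟨b, .cons (.single ha) hb hab⟩

theorem eq_of_not_strictReachable {V : Type*} {lab : V → V → Finset ℕ}
    (hsymm : ∀ x y, lab x y = lab y x) {u v w : V}
    (hno1 : ¬ StrictReachable lab u w) (hno2 : ¬ StrictReachable lab w u)
    {a b : ℕ} (ha : a ∈ lab u v) (hb : b ∈ lab v w) : a = b := by
  rcases lt_trichotomy a b with hab | rfl | hba
  · exact absurd (.of_lt ha hb hab) hno1
  · rfl
  · rw [hsymm] at ha hb
    exact absurd (.of_lt hb ha hba) hno2

theorem Finset.exists_eq_singleton_of_forall_eq {α : Type*} {s t : Finset α}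
    (hs : s.Nonempty) (ht : t.Nonempty) (h : ∀ a ∈ s, ∀ b ∈ t, a = b) :
    ∃ x, s = {x} ∧ t = {x} := by
  obtain ⟨a, ha⟩ := hs
  obtain ⟨b, hb⟩ := ht
  obtain rfl := h a ha b hb
  exact ⟨a, eq_singleton_iff_unique_mem.mpr ⟨ha, fun x hx => h x hx a hb⟩,
    eq_singleton_iff_unique_mem.mpr ⟨hb, fun x hx => (h a ha x hx).symm⟩⟩

theorem stmt0_general {V : Type*} (lab : V → V → Finset ℕ)
    (hsymm : ∀ x y, lab x y = lab y x)
    (u v w : V)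
    (h1 : (lab u v).Nonempty) (h2 : (lab v w).Nonempty)
    (hno1 : ¬ StrictReachable lab u w) (hno2 : ¬ StrictReachable lab w u) :
    ∃ α : ℕ, lab u v = {α} ∧ lab v w = {α} :=
  Finset.exists_eq_singleton_of_forall_eq h1 h2 fun _ ha _ hb =>
    eq_of_not_strictReachable hsymm hno1 hno2 ha hb

/-- Two adjacent labeled edges whose non-shared endpoints are mutually unreachable
(in the strict reachability relation) must both carry the same unique single label. -/
theorem stmt0 {V : Type*} [Fintype V] (G : SimpleGraph V) (lab : V → V → Finset ℕ)
    (hsymm : ∀ x y, lab x y = lab y x)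
    (hsupp : ∀ x y, (lab x y).Nonempty → G.Adj x y)
    (u v w : V) (huv : G.Adj u v) (hvw : G.Adj v w) (huw : u ≠ w)
    (h1 : (lab u v).Nonempty) (h2 : (lab v w).Nonempty)
    (hno1 : ¬ StrictReachable lab u w) (hno2 : ¬ StrictReachable lab w u) :
    ∃ α : ℕ, lab u v = {α} ∧ lab v w = {α} :=
  stmt0_general lab hsymm u v w h1 h2 hno1 hno2
end

section
/- Let (G, λ) be a temporal graph on a finite vertex set V with |V| = n, realizing a directed graph D via strict temporal paths (D is exactly the strict reachability relation of (G,λ)). Suppose some edge e has |λ(e)| > n. Then there exists a label β ∈ λ(e) such that the labeling λ' obtained by removing β from λ(e) (and leaving all other edges unchanged) still has strict reachability relation exactly D. In particular, every minimal realization assigns at most n labels to each edge. -/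
section Aux

variable {V : Type*}

lemma sreach_mono {lab lab' : V → V → Finset ℕ}
    (h : ∀ p q, lab p q ⊆ lab' p q) :
    ∀ {x y : V} {t : ℕ}, SReach lab x y t → SReach lab' x y t := by
  intro x y t hw
  induction hw with
  | single h1 => exact .single (h _ _ h1)
  | cons h1 h2 hlt ih => exact .cons ih (h _ _ h2) hlt

lemma sreach_below {lab lab' : V → V → Finset ℕ} {β : ℕ}
    (hlow : ∀ p q t, t ∈ lab p q → t ≠ β → t ∈ lab' p q) :
    ∀ {x y : V} {t : ℕ}, SReach lab x y t → t < β → SReach lab' x y t := by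
  intro x y t hw
  induction hw with
  | single h1 => intro ht; exact .single (hlow _ _ _ h1 ht.ne)
  | cons h1 h2 hlt ih => intro ht; exact .cons (ih (hlt.trans ht)) (hlow _ _ _ h2 ht.ne) hlt

lemma sreach_cut {lab lab' : V → V → Finset ℕ} {β : ℕ}
    (hlow : ∀ p q t, t ∈ lab p q → t ≠ β → t ∈ lab' p q) :
    ∀ {x y : V} {t : ℕ},
      SReach (fun p q => (lab p q).filter (β < ·)) x y t → SReach lab' x y t := by
  intro x y t hw
  induction hw with
  | single h1 =>
      obtain ⟨hm, hb⟩ := Finset.mem_filter.1 h1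
      exact .single (hlow _ _ _ hm hb.ne')
  | cons h1 h2 hlt ih =>
      obtain ⟨hm, hb⟩ := Finset.mem_filter.1 h2
      exact .cons ih (hlow _ _ _ hm hb.ne') hlt

lemma sreach_append {lab lab' : V → V → Finset ℕ} {β : ℕ}
    (hlow : ∀ p q t, t ∈ lab p q → t ≠ β → t ∈ lab' p q) :
    ∀ {v y : V} {t'' : ℕ}, SReach (fun p q => (lab p q).filter (β < ·)) v y t'' →
      ∀ {x : V} {s : ℕ}, SReach lab' x v s → s ≤ β → SReach lab' x y t'' := by
  intro v y t'' hw
  induction hw with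
  | single h1 =>
      intro x s hx hs
      obtain ⟨hm, hb⟩ := Finset.mem_filter.1 h1
      exact .cons hx (hlow _ _ _ hm hb.ne') (lt_of_le_of_lt hs hb)
  | cons h1 h2 hlt ih =>
      intro x s hx hs
      obtain ⟨hm, hb⟩ := Finset.mem_filter.1 h2
      exact .cons (ih hx hs) (hlow _ _ _ hm hb.ne') hlt

/-- The state after decomposing a walk at a crossing of the special edge `u → v`
at the removed time `β`. -/
def CrossP (lab lab' : V → V → Finset ℕ) (β : ℕ) (u v x y : V) (t : ℕ) : Prop :=
  β ≤ t ∧ (x = u ∨ ∃ s, s < β ∧ SReach lab' x u s) ∧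
    (y = v ∨ ∃ t'', β < t'' ∧ t'' ≤ t ∧
      SReach (fun p q => (lab p q).filter (β < ·)) v y t'')

lemma cross_extend {lab lab' : V → V → Finset ℕ} {β : ℕ} {u v x w z : V} {t0 t' : ℕ}
    (hc : CrossP lab lab' β u v x w t0) (h' : t' ∈ lab w z) (hlt : t0 < t') :
    CrossP lab lab' β u v x z t' := by
  obtain ⟨hβ, hpre, hpost⟩ := hc
  have hβt' : β < t' := lt_of_le_of_lt hβ hlt
  refine ⟨hβt'.le, hpre, Or.inr ?_⟩
  rcases hpost with rfl | ⟨t'', h1, h2, hww⟩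
  · exact ⟨t', hβt', le_refl _, .single (Finset.mem_filter.2 ⟨h', hβt'⟩)⟩
  · exact ⟨t', hβt', le_refl _,
      .cons hww (Finset.mem_filter.2 ⟨h', hβt'⟩) (lt_of_le_of_lt h2 hlt)⟩

lemma decompose {lab lab' : V → V → Finset ℕ} {a b : V} {β : ℕ}
    (hkey : ∀ p q t, t ∈ lab p q →
      t ∈ lab' p q ∨ (t = β ∧ ((p = a ∧ q = b) ∨ (p = b ∧ q = a)))) :
    ∀ {x y : V} {t : ℕ}, SReach lab x y t →
      SReach lab' x y t ∨ CrossP lab lab' β a b x y t ∨ CrossP lab lab' β b a x y t := by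
  intro x y t hw
  induction hw with
  | single h1 =>
      rcases hkey _ _ _ h1 with hm | ⟨rfl, hor⟩
      · exact Or.inl (.single hm)
      · rcases hor with ⟨rfl, rfl⟩ | ⟨rfl, rfl⟩
        · exact Or.inr (Or.inl ⟨le_refl _, Or.inl rfl, Or.inl rfl⟩)
        · exact Or.inr (Or.inr ⟨le_refl _, Or.inl rfl, Or.inl rfl⟩)
  | cons h1 h2 hlt ih =>
      rcases ih with wm | (c1 | c2)
      · rcases hkey _ _ _ h2 with hm | ⟨rfl, hor⟩
        · exact Or.inl (.cons wm hm hlt)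
        · rcases hor with ⟨rfl, rfl⟩ | ⟨rfl, rfl⟩
          · exact Or.inr (Or.inl ⟨le_refl _, Or.inr ⟨_, hlt, wm⟩, Or.inl rfl⟩)
          · exact Or.inr (Or.inr ⟨le_refl _, Or.inr ⟨_, hlt, wm⟩, Or.inl rfl⟩)
      · exact Or.inr (Or.inl (cross_extend c1 h2 hlt))
      · exact Or.inr (Or.inr (cross_extend c2 h2 hlt))

lemma half {lab lab' : V → V → Finset ℕ} {β p : ℕ} {u v : V}
    (hlow : ∀ p' q' t, t ∈ lab p' q' → t ≠ β → t ∈ lab' p' q')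
    (hsub : ∀ p' q', lab' p' q' ⊆ lab p' q')
    (hpmem : p ∈ lab u v) (hβmem : β ∈ lab u v) (hpβ : p < β)
    (good : ∀ x, x ≠ u → x ≠ v → ({t | SReach lab x u t}).Nonempty →
      ({t | SReach lab x v t}).Nonempty →
      p ≤ sInf {t | SReach lab x u t} → sInf {t | SReach lab x u t} < β →
      sInf {t | SReach lab x v t} < p ∨ β < sInf {t | SReach lab x v t})
    {x y : V} (hxy : x ≠ y)
    (hPre : x = u ∨ ∃ s, s < β ∧ SReach lab' x u s)
    (hPost : y = v ∨ ∃ t'', β < t'' ∧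
      SReach (fun p' q' => (lab p' q').filter (β < ·)) v y t'') :
    ∃ t', SReach lab' x y t' := by
  have hp' : p ∈ lab' u v := hlow _ _ _ hpmem hpβ.ne
  by_cases hxu : x = u
  · subst hxu
    rcases hPost with rfl | ⟨t'', ht'', hw⟩
    · exact ⟨p, .single hp'⟩
    · exact ⟨t'', sreach_append hlow hw (.single hp') hpβ.le⟩
  · rcases hPre with h | ⟨s, hsβ, w'⟩
    · exact absurd h hxu
    · have w'lab : SReach lab x u s := sreach_mono hsub w'
      have hE : ({t | SReach lab x u t}).Nonempty := ⟨s, w'lab⟩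
      have hmemE : SReach lab x u (sInf {t | SReach lab x u t}) := Nat.sInf_mem hE
      have heas : sInf {t | SReach lab x u t} ≤ s := Nat.sInf_le w'lab
      have heaβ : sInf {t | SReach lab x u t} < β := lt_of_le_of_lt heas hsβ
      by_cases hcase : sInf {t | SReach lab x u t} < p
      · have w2 : SReach lab' x u _ := sreach_below hlow hmemE (hcase.trans hpβ)
        have w3 : SReach lab' x v p := .cons w2 hp' hcase
        rcases hPost with rfl | ⟨t'', ht'', hw⟩
        · exact ⟨p, w3⟩
        · exact ⟨t'', sreach_append hlow hw w3 hpβ.le⟩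
      · push_neg at hcase
        by_cases hxv : x = v
        · subst hxv
          rcases hPost with h | ⟨t'', ht'', hw⟩
          · exact absurd h.symm hxy
          · exact ⟨t'', sreach_cut hlow hw⟩
        · have hwb : SReach lab x v β := .cons hmemE hβmem heaβ
          have hB : ({t | SReach lab x v t}).Nonempty := ⟨β, hwb⟩
          have hebβ : sInf {t | SReach lab x v t} ≤ β := Nat.sInf_le hwb
          rcases good x hxu hxv hE hB hcase heaβ with hlt | hgt
          · have wb : SReach lab x v (sInf {t | SReach lab x v t}) := Nat.sInf_mem hB
            have wb' : SReach lab' x v _ := sreach_below hlow wb (hlt.trans hpβ)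
            rcases hPost with rfl | ⟨t'', ht'', hw⟩
            · exact ⟨_, wb'⟩
            · exact ⟨t'', sreach_append hlow hw wb' (hlt.trans hpβ).le⟩
          · exact absurd hebβ (not_le.2 hgt)

lemma loop_remove {lab lab' : V → V → Finset ℕ}
    (hkey : ∀ p q t, t ∈ lab p q → t ∈ lab' p q ∨ p = q) :
    ∀ {x y : V} {t : ℕ}, SReach lab x y t → (∃ t' ≤ t, SReach lab' x y t') ∨ x = y := by
  intro x y t hw
  induction hw with
  | single h1 =>
      rcases hkey _ _ _ h1 with hm | heq
      · exact Or.inl ⟨_, le_refl _, .single hm⟩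
      · exact Or.inr heq
  | cons h1 h2 hlt ih =>
      rcases hkey _ _ _ h2 with hm | heq
      · rcases ih with ⟨t0, ht0, w⟩ | rfl
        · exact Or.inl ⟨_, le_refl _, .cons w hm (lt_of_le_of_lt ht0 hlt)⟩
        · exact Or.inl ⟨_, le_refl _, .single hm⟩
      · subst heq
        rcases ih with ⟨t0, ht0, w⟩ | rfl
        · exact Or.inl ⟨t0, ht0.trans hlt.le, w⟩
        · exact Or.inr rfl

end Aux

/-- If an edge of a realization carries more than `|V|` labels, some label can be removed
without changing the strict reachability relation. -/
theorem stmt1 {V : Type*} [Fintype V] [DecidableEq V] (lab : V → V → Finset ℕ)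
    (A : V → V → Prop)
    (hsymm : ∀ x y, lab x y = lab y x)
    (hreal : ∀ x y, A x y ↔ x ≠ y ∧ StrictReachable lab x y)
    (a b : V) (hcard : Fintype.card V < (lab a b).card) :
    ∃ β ∈ lab a b, ∀ x y, A x y ↔ x ≠ y ∧
      StrictReachable (fun p q =>
        if (p = a ∧ q = b) ∨ (p = b ∧ q = a) then (lab a b).erase β else lab p q) x y := by
  classical
  have hTne : (lab a b).Nonempty :=
    Finset.card_pos.1 (lt_of_le_of_lt (Nat.zero_le _) hcard)
  by_cases hab : a = b
  · -- loop case: crossing a self-loop is never needed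
    refine ⟨(lab a b).min' hTne, Finset.min'_mem _ _, ?_⟩
    intro x y
    rw [hreal x y]
    apply and_congr_right
    intro hxy
    constructor
    · rintro ⟨t, hw⟩
      have hkey : ∀ p q t, t ∈ lab p q →
          t ∈ (fun p q => if (p = a ∧ q = b) ∨ (p = b ∧ q = a)
                then (lab a b).erase ((lab a b).min' hTne) else lab p q) p q ∨ p = q := by
        intro p q t ht
        dsimp only
        split_ifs with hc
        · rcases hc with ⟨hp, hq⟩ | ⟨hp, hq⟩
          · exact Or.inr (by rw [hp, hq]; exact hab)
          · exact Or.inr (by rw [hp, hq]; exact hab.symm)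
        · exact Or.inl ht
      rcases loop_remove hkey hw with ⟨t', _, w⟩ | h
      · exact ⟨t', w⟩
      · exact absurd h hxy
    · rintro ⟨t, hw⟩
      refine ⟨t, sreach_mono ?_ hw⟩
      intro p q
      split_ifs with hc
      · rcases hc with ⟨hp, hq⟩ | ⟨hp, hq⟩
        · rw [hp, hq]
          exact Finset.erase_subset _ _
        · rw [hp, hq]
          intro s hs
          rw [← hsymm a b]
          exact Finset.mem_of_mem_erase hs
      · exact Finset.Subset.refl _
  · -- main case: a ≠ b
    set m := (lab a b).min' hTne with hm
    set interior := (lab a b).erase m with hint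
    have hcard2 : 2 ≤ Fintype.card V := by
      haveI : Nontrivial V := ⟨⟨a, b, hab⟩⟩
      exact Fintype.one_lt_card
    set pf : ℕ → ℕ := fun β =>
      if h : ((lab a b).filter (· < β)).Nonempty then ((lab a b).filter (· < β)).max' h
      else 0 with hpf
    have hpspec : ∀ β ∈ interior, pf β ∈ lab a b ∧ pf β < β ∧
        ∀ t ∈ lab a b, t < β → t ≤ pf β := by
      intro β hβ
      have hβT : β ∈ lab a b := Finset.mem_of_mem_erase hβ
      have hne' : ((lab a b).filter (· < β)).Nonempty := by
        refine ⟨m, Finset.mem_filter.2 ⟨Finset.min'_mem _ _, ?_⟩⟩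
        exact lt_of_le_of_ne (Finset.min'_le _ _ hβT) (Finset.ne_of_mem_erase hβ).symm
      rw [hpf]
      dsimp only
      rw [dif_pos hne']
      obtain ⟨h1, h2⟩ :=
        Finset.mem_filter.1 (((lab a b).filter (· < β)).max'_mem hne')
      refine ⟨h1, h2, ?_⟩
      intro t ht htβ
      exact Finset.le_max' ((lab a b).filter (· < β)) t
        (Finset.mem_filter.2 ⟨ht, htβ⟩)
    set W : ℕ → V → Prop := fun β x =>
      x ≠ a ∧ x ≠ b ∧
      ({t | SReach lab x a t}).Nonempty ∧ ({t | SReach lab x b t}).Nonempty ∧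
      pf β ≤ sInf {t | SReach lab x a t} ∧ sInf {t | SReach lab x a t} ≤ β ∧
      pf β ≤ sInf {t | SReach lab x b t} ∧ sInf {t | SReach lab x b t} ≤ β ∧
      (sInf {t | SReach lab x a t} < β ∨ sInf {t | SReach lab x b t} < β) with hWdef
    have hgoodex : ∃ β ∈ interior, ∀ x : V, ¬ W β x := by
      by_contra hcon
      push_neg at hcon
      have hcon' : ∀ β : ℕ, ∃ x : V, β ∈ interior → W β x := by
        intro β
        by_cases h : β ∈ interior
        · exact (hcon β h).imp fun x hx _ => hx
        · exact ⟨a, fun h' => absurd h' h⟩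
      choose f hf using hcon'
      have key : ∀ β1 ∈ interior, ∀ β2 ∈ interior, β1 < β2 → f β1 ≠ f β2 := by
        intro β1 h1 β2 h2 hlt heq
        obtain ⟨_, _, _, _, hp1a, ha1, hp1b, hb1, hor1⟩ := hf β1 h1
        obtain ⟨_, _, _, _, hp2a, ha2, hp2b, hb2, hor2⟩ := hf β2 h2
        rw [← heq] at hp2a hp2b
        have hβ1p : β1 ≤ pf β2 :=
          (hpspec β2 h2).2.2 β1 (Finset.mem_of_mem_erase h1) hlt
        rcases hor1 with h | h
        · linarith
        · linarith
      have hmaps : ∀ β ∈ interior, f β ∈ (Finset.univ.erase b).erase a := by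
        intro β hβ
        obtain ⟨hxa, hxb, _⟩ := hf β hβ
        exact Finset.mem_erase.2 ⟨hxa, Finset.mem_erase.2 ⟨hxb, Finset.mem_univ _⟩⟩
      have hinj : Set.InjOn f interior := by
        intro β1 h1 β2 h2 heq
        rcases lt_trichotomy β1 β2 with h | h | h
        · exact absurd heq (key _ h1 _ h2 h)
        · exact h
        · exact absurd heq.symm (key _ h2 _ h1 h)
      have hle := Finset.card_le_card_of_injOn f hmaps hinj
      have hci : interior.card = (lab a b).card - 1 :=
        Finset.card_erase_of_mem (Finset.min'_mem _ _)
      have hc2 : ((Finset.univ.erase b).erase a).card = Fintype.card V - 2 := by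
        rw [Finset.card_erase_of_mem (Finset.mem_erase.2 ⟨hab, Finset.mem_univ _⟩),
          Finset.card_erase_of_mem (Finset.mem_univ _), Finset.card_univ]
        omega
      omega
    obtain ⟨β, hβint, hgood⟩ := hgoodex
    have hβT : β ∈ lab a b := Finset.mem_of_mem_erase hβint
    obtain ⟨hpT, hpβ, hpmax⟩ := hpspec β hβint
    refine ⟨β, hβT, ?_⟩
    set lab' : V → V → Finset ℕ := fun p q =>
      if (p = a ∧ q = b) ∨ (p = b ∧ q = a) then (lab a b).erase β else lab p q with hlab'
    have hlow : ∀ p q t, t ∈ lab p q → t ≠ β → t ∈ lab' p q := by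
      intro p q t ht htβ
      rw [hlab']
      dsimp only
      split_ifs with hc
      · rcases hc with ⟨hp, hq⟩ | ⟨hp, hq⟩
        · rw [hp, hq] at ht
          exact Finset.mem_erase.2 ⟨htβ, ht⟩
        · rw [hp, hq] at ht
          refine Finset.mem_erase.2 ⟨htβ, ?_⟩
          rw [hsymm a b]
          exact ht
      · exact ht
    have hsub : ∀ p q, lab' p q ⊆ lab p q := by
      intro p q
      rw [hlab']
      dsimp only
      split_ifs with hc
      · rcases hc with ⟨hp, hq⟩ | ⟨hp, hq⟩
        · rw [hp, hq]
          exact Finset.erase_subset _ _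
        · rw [hp, hq]
          intro s hs
          rw [← hsymm a b]
          exact Finset.mem_of_mem_erase hs
      · exact Finset.Subset.refl _
    have hkey : ∀ p q t, t ∈ lab p q →
        t ∈ lab' p q ∨ (t = β ∧ ((p = a ∧ q = b) ∨ (p = b ∧ q = a))) := by
      intro p q t ht
      by_cases htβ : t = β
      · by_cases hc : (p = a ∧ q = b) ∨ (p = b ∧ q = a)
        · exact Or.inr ⟨htβ, hc⟩
        · left
          rw [hlab']
          dsimp only
          rw [if_neg hc]
          exact ht
      · exact Or.inl (hlow _ _ _ ht htβ)
    have hgoodab : ∀ x, x ≠ a → x ≠ b → ({t | SReach lab x a t}).Nonempty →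
        ({t | SReach lab x b t}).Nonempty →
        pf β ≤ sInf {t | SReach lab x a t} → sInf {t | SReach lab x a t} < β →
        sInf {t | SReach lab x b t} < pf β ∨ β < sInf {t | SReach lab x b t} := by
      intro x hxa hxb hEa hEb hpa haβ
      by_contra hcon
      push_neg at hcon
      exact hgood x ⟨hxa, hxb, hEa, hEb, hpa, haβ.le, hcon.1, hcon.2, Or.inl haβ⟩
    have hgoodba : ∀ x, x ≠ b → x ≠ a → ({t | SReach lab x b t}).Nonempty →
        ({t | SReach lab x a t}).Nonempty →
        pf β ≤ sInf {t | SReach lab x b t} → sInf {t | SReach lab x b t} < β →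
        sInf {t | SReach lab x a t} < pf β ∨ β < sInf {t | SReach lab x a t} := by
      intro x hxb hxa hEb hEa hpb hbβ
      by_contra hcon
      push_neg at hcon
      exact hgood x ⟨hxa, hxb, hEa, hEb, hcon.1, hcon.2, hpb, hbβ.le, Or.inr hbβ⟩
    have hpba : pf β ∈ lab b a := by rw [← hsymm a b]; exact hpT
    have hβba : β ∈ lab b a := by rw [← hsymm a b]; exact hβT
    intro x y
    rw [hreal x y]
    apply and_congr_right
    intro hxy
    constructor
    · rintro ⟨t, hw⟩
      rcases decompose hkey hw with wm | (c1 | c2)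
      · exact ⟨t, wm⟩
      · obtain ⟨_, hpre, hpost⟩ := c1
        refine half hlow hsub hpT hβT hpβ hgoodab hxy hpre ?_
        rcases hpost with h | ⟨t'', h1, _, hw'⟩
        · exact Or.inl h
        · exact Or.inr ⟨t'', h1, hw'⟩
      · obtain ⟨_, hpre, hpost⟩ := c2
        refine half hlow hsub hpba hβba hpβ hgoodba hxy hpre ?_
        rcases hpost with h | ⟨t'', h1, _, hw'⟩
        · exact Or.inl h
        · exact Or.inr ⟨t'', h1, hw'⟩
    · rintro ⟨t, hw⟩
      exact ⟨t, sreach_mono hsub hw⟩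
end

section
/- Let D = (V, A) be a finite simple directed graph that is acyclic (a DAG). Then there exists a happy directed temporal graph realizing D: a directed graph G' on V together with an injective labeling λ assigning each arc of G' exactly one label, such that the (strict) reachability relation of (G', λ) equals A. Concretely, taking G' = D and labeling arcs so that along every directed path of length ≥ 2 labels strictly decrease (e.g., processing vertices in reverse topological order, giving the out-arcs of the i-th vertex distinct labels in the range (i·n, i·n + n]) yields such a realization. -/
/-!
Give the arc `u → v` a label that grows with the number of vertices reachable from `u`. Along an
arc `u → v` of a DAG, `u` reaches strictly more vertices than `v`, so the labels of any two
consecutive arcs decrease: no strict temporal path has two arcs, and strict reachability is the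
arc relation itself. Placing the labels in disjoint blocks of width `|V|²` makes them distinct.
-/

open Relation

theorem ncard_transGen_lt_of_rel {V : Type*} [Finite V] {A : V → V → Prop}
    (hacyc : ∀ x, ¬ TransGen A x x) {u v : V} (huv : A u v) :
    {x | TransGen A v x}.ncard < {x | TransGen A u x}.ncard :=
  Set.ncard_lt_ncard <| LE.le.ssubset_of_mem_notMem (fun _ hx => TransGen.head huv hx)
    (TransGen.single huv) (hacyc v)

theorem exists_injective_lt_of_lt {α : Type*} [Finite α] (r : α → ℕ) :
    ∃ L : α → ℕ, Function.Injective L ∧ ∀ a b, r a < r b → L a < L b := by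
  let e := Finite.equivFin α
  set m := Nat.card α
  refine ⟨fun a => m * r a + e a, fun a b hab => e.injective (Fin.ext ?_), fun a b hr => ?_⟩
  · simpa [Nat.mul_add_mod, Nat.mod_eq_of_lt (e _).isLt] using congrArg (· % m) hab
  · calc m * r a + e a < m * (r a + 1) := by
          rw [mul_add, mul_one]; exact Nat.add_lt_add_left (e a).isLt _
      _ ≤ m * r b := Nat.mul_le_mul_left m hr
      _ ≤ m * r b + e b := Nat.le_add_right _ _

theorem SReach.mem_of_forall_not_lt {V : Type*} {lab : V → V → Finset ℕ}
    (hlab : ∀ u v w t t', t ∈ lab u v → t' ∈ lab v w → ¬ t < t') {u w : V} {t : ℕ}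
    (h : SReach lab u w t) : t ∈ lab u w := by
  induction h with
  | single ht => exact ht
  | cons _ ht' hlt ih => exact absurd hlt (hlab _ _ _ _ _ ih ht')

open Classical in
noncomputable def arcLabeling {V : Type*} (A : V → V → Prop) (L : V → V → ℕ) :
    V → V → Finset ℕ :=
  fun u v => if A u v then {L u v} else ∅

section arcLabeling

variable {V : Type*} {A : V → V → Prop} {L : V → V → ℕ}

theorem mem_arcLabeling {u v : V} {t : ℕ} : t ∈ arcLabeling A L u v ↔ A u v ∧ t = L u v := by
  unfold arcLabeling
  split_ifs with h <;> simp [h]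

theorem arcLabeling_of_rel {u v : V} (h : A u v) : arcLabeling A L u v = {L u v} := by
  simp [arcLabeling, h]

theorem arcLabeling_of_not_rel {u v : V} (h : ¬ A u v) : arcLabeling A L u v = ∅ := by
  simp [arcLabeling, h]

theorem arcLabeling_injective (hL : Function.Injective (Function.uncurry L)) {u v x y : V} {t : ℕ}
    (h₁ : t ∈ arcLabeling A L u v) (h₂ : t ∈ arcLabeling A L x y) : u = x ∧ v = y :=
  Prod.ext_iff.1 <| @hL (u, v) (x, y) <|
    (mem_arcLabeling.1 h₁).2.symm.trans (mem_arcLabeling.1 h₂).2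

theorem strictReachable_arcLabeling_iff (hdec : ∀ u v w, A u v → A v w → L v w < L u v)
    {u v : V} : StrictReachable (arcLabeling A L) u v ↔ A u v := by
  refine ⟨fun ⟨t, h⟩ => ?_, fun h => ⟨L u v, SReach.single (mem_arcLabeling.2 ⟨h, rfl⟩)⟩⟩
  refine (mem_arcLabeling.1 (h.mem_of_forall_not_lt ?_)).1
  intro a b c s s' hs hs'
  obtain ⟨hab, rfl⟩ := mem_arcLabeling.1 hs
  obtain ⟨hbc, rfl⟩ := mem_arcLabeling.1 hs'
  exact (hdec a b c hab hbc).not_gt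

end arcLabeling

theorem stmt4_general {V : Type*} [Fintype V] (A : V → V → Prop)
    (hacyc : ∀ x, ¬ Relation.TransGen A x x) :
    ∃ lab : V → V → Finset ℕ,
      (∀ u v, A u v → ∃ t, lab u v = {t}) ∧
      (∀ u v, ¬ A u v → lab u v = ∅) ∧
      (∀ u v x y t, t ∈ lab u v → t ∈ lab x y → u = x ∧ v = y) ∧
      (∀ u v, A u v ↔ u ≠ v ∧ StrictReachable lab u v) := by
  obtain ⟨L, hLinj, hLlt⟩ :=
    exists_injective_lt_of_lt fun p : V × V => {x | TransGen A p.1 x}.ncard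
  have hdec : ∀ u v w, A u v → A v w → Function.curry L v w < Function.curry L u v :=
    fun _ _ _ huv _ => hLlt _ _ (ncard_transGen_lt_of_rel hacyc huv)
  refine ⟨arcLabeling A (Function.curry L), fun u v h => ⟨_, arcLabeling_of_rel h⟩,
    fun u v h => arcLabeling_of_not_rel h,
    fun u v x y t => arcLabeling_injective (by rwa [Function.uncurry_curry]), fun u v => ?_⟩
  rw [strictReachable_arcLabeling_iff hdec]
  refine ⟨fun h => ⟨?_, h⟩, And.right⟩
  rintro rfl
  exact hacyc u (TransGen.single h)

/-- Every finite DAG is the strict reachability graph of a happy directed temporal graph: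
each arc gets exactly one label, non-arcs none, all labels are distinct, and the
strict reachability relation is exactly the arc relation. -/
theorem stmt4 {V : Type*} [Fintype V] (A : V → V → Prop)
    (hirr : ∀ x, ¬ A x x)
    (hacyc : ∀ x, ¬ Relation.TransGen A x x) :
    ∃ lab : V → V → Finset ℕ,
      (∀ u v, A u v → ∃ t, lab u v = {t}) ∧
      (∀ u v, ¬ A u v → lab u v = ∅) ∧
      (∀ u v x y t, t ∈ lab u v → t ∈ lab x y → u = x ∧ v = y) ∧
      (∀ u v, A u v ↔ u ≠ v ∧ StrictReachable lab u v) :=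
  stmt4_general A hacyc
end

section
/- Let D = (V, A) be a finite simple directed graph that is transitive (whenever (u,v) ∈ A and (v,w) ∈ A with u,v,w distinct, also (u,w) ∈ A, and D has no self-loops). Then any injective labeling λ : A → ℕ that assigns each arc of D a single distinct label gives a happy directed temporal graph whose strict reachability relation equals A. In particular, every transitive directed graph is realizable as the reachability graph of a happy directed temporal graph. -/
theorem SReach.eq_or_rel {V : Type*} {A : V → V → Prop} {lab : V → V → Finset ℕ}
    (hsupp : ∀ u v t, t ∈ lab u v → A u v)
    (htrans : ∀ u v w, u ≠ w → A u v → A v w → A u w) {u v : V} {t : ℕ}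
    (h : SReach lab u v t) : u = v ∨ A u v := by
  induction h with
  | single h => exact Or.inr (hsupp _ _ _ h)
  | @cons v w _ _ _ hlab _ ih =>
    have hvw := hsupp _ _ _ hlab
    rcases ih with rfl | huv
    · exact Or.inr hvw
    · by_cases huw : u = w
      · exact Or.inl huw
      · exact Or.inr (htrans u v w huw huv hvw)

theorem rel_of_mem_lab {V : Type*} {A : V → V → Prop} {lab : V → V → Finset ℕ}
    (hzero : ∀ u v, ¬ A u v → lab u v = ∅) {u v : V} {t : ℕ} (ht : t ∈ lab u v) : A u v := by
  by_contra hA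
  simp [hzero u v hA] at ht

theorem stmt5_general {V : Type*} (A : V → V → Prop) (lab : V → V → Finset ℕ)
    (hirr : ∀ x, ¬ A x x)
    (htrans : ∀ u v w, u ≠ w → A u v → A v w → A u w)
    (hone : ∀ u v, A u v → ∃ t, lab u v = {t})
    (hzero : ∀ u v, ¬ A u v → lab u v = ∅) :
    ∀ u v, A u v ↔ u ≠ v ∧ StrictReachable lab u v := by
  intro u v
  constructor
  · intro huv
    obtain ⟨t, ht⟩ := hone u v huv
    exact ⟨fun h => hirr u (h ▸ huv), t, .single (ht ▸ Finset.mem_singleton_self t)⟩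
  · rintro ⟨hne, t, h⟩
    exact (h.eq_or_rel (fun _ _ _ => rel_of_mem_lab hzero) htrans).resolve_left hne

/-- For a transitive simple digraph, any injective single labeling of its arcs yields a happy
directed temporal graph whose strict reachability relation equals the arc relation. -/
theorem stmt5 {V : Type*} (A : V → V → Prop) (lab : V → V → Finset ℕ)
    (hirr : ∀ x, ¬ A x x)
    (htrans : ∀ u v w, u ≠ w → A u v → A v w → A u w)
    (hone : ∀ u v, A u v → ∃ t, lab u v = {t})
    (hzero : ∀ u v, ¬ A u v → lab u v = ∅)
    (hinj : ∀ u v x y t, t ∈ lab u v → t ∈ lab x y → u = x ∧ v = y) :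
    ∀ u v, A u v ↔ u ≠ v ∧ StrictReachable lab u v :=
  stmt5_general A lab hirr htrans hone hzero
end

section
/- Let D = (V, A) be a directed graph and let C = (v₁, v₂, …, v_ℓ, v₁) with ℓ ≥ 3 be an induced directed cycle in D (the arcs of D among {v₁,…,v_ℓ} are exactly the cycle arcs (vᵢ, vᵢ₊₁) with indices mod ℓ). If (D', λ) is a directed temporal graph whose non-strict reachability relation equals A (where the underlying arc set of D' is contained in A), then at least one arc of C receives no label, i.e., there exists i with λ((vᵢ, vᵢ₊₁)) = ∅. -/
/-- On an induced directed cycle of length at least 3, any non-strict realization leaves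
at least one cycle arc unlabeled. -/
theorem stmt7 {V : Type*} (A : V → V → Prop) (lab : V → V → Finset ℕ)
    (ℓ : ℕ) (hl : 3 ≤ ℓ) (v : ZMod ℓ → V) (hinj : Function.Injective v)
    (hcyc : ∀ i j : ZMod ℓ, A (v i) (v j) ↔ j = i + 1)
    (hsub : ∀ x y, (lab x y).Nonempty → A x y)
    (hreal : ∀ x y, A x y ↔ x ≠ y ∧ NonStrictReachable lab x y) :
    ∃ i : ZMod ℓ, lab (v i) (v (i + 1)) = ∅ := by
  by_contra hcon
  push_neg at hcon
  have hne : ∀ i : ZMod ℓ, (lab (v i) (v (i + 1))).Nonempty := fun i =>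
    hcon i
  haveI : NeZero ℓ := ⟨by omega⟩
  haveI : Fact (1 < ℓ) := ⟨by omega⟩
  set f : ZMod ℓ → ℕ := fun i => (lab (v i) (v (i + 1))).min' (hne i) with hf
  have hstep : ∀ i : ZMod ℓ, f (i + 1) < f i := by
    intro i
    by_contra hle
    push_neg at hle
    have hreach : NonStrictReachable lab (v i) (v (i + 1 + 1)) :=
      ⟨f (i + 1), NSReach.cons (NSReach.single (Finset.min'_mem _ (hne i)))
        (Finset.min'_mem _ (hne (i + 1))) hle⟩
    have hne2 : v i ≠ v (i + 1 + 1) := by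
      intro h
      have := hinj h
      have h2 : ((2 : ℕ) : ZMod ℓ) = 0 := by
        push_cast
        linear_combination -this
      rw [ZMod.natCast_eq_zero_iff] at h2
      have := Nat.le_of_dvd (by norm_num) h2
      omega
    have hA : A (v i) (v (i + 1 + 1)) := (hreal _ _).mpr ⟨hne2, hreach⟩
    have := (hcyc i (i + 1 + 1)).mp hA
    have h10 : (1 : ZMod ℓ) = 0 := by linear_combination this
    exact one_ne_zero h10
  have hdesc : ∀ n : ℕ, f ((n : ZMod ℓ)) + n ≤ f 0 := by
    intro n
    induction n with
    | zero => simp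
    | succ k ih =>
      have := hstep ((k : ZMod ℓ))
      push_cast
      omega
  have := hdesc (f 0 + 1)
  omega
end

section
/- Let (G, λ) be an undirected temporal graph realizing a directed graph D via strict temporal paths, let c be a vertex, and let e₁ = {c, u₁}, e₂ = {c, u₂}, e₃ = {c, u₃} be three distinct bridges of G incident with c, each assigned exactly two labels by λ. Then no single label p can belong to λ(e₁) ∩ λ(e₂) ∩ λ(e₃). Equivalently: no three double-labeled bridges sharing a common endpoint share a common label. -/
/-- If `s(c,u)` is a bridge but `c - v - u` is a path avoiding this edge, contradiction. -/
lemma bridge_contra {V : Type*} (G : SimpleGraph V) {c u v : V}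
    (hb : G.IsBridge s(c, u)) (hcv : G.Adj c v) (hvu : G.Adj v u)
    (hvu' : v ≠ u) (hvc : v ≠ c) : False := by
  rw [SimpleGraph.isBridge_iff] at hb
  have hnr := hb
  apply hnr
  have h1 : (G \ SimpleGraph.fromEdgeSet {s(c, u)}).Adj c v := by
    refine ⟨hcv, ?_⟩
    simp only [SimpleGraph.fromEdgeSet_adj, Set.mem_singleton_iff, Sym2.eq, Sym2.rel_iff',
      Prod.mk.injEq, Prod.swap_prod_mk]
    have := hcv.ne
    tauto
  have h2 : (G \ SimpleGraph.fromEdgeSet {s(c, u)}).Adj v u := by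
    refine ⟨hvu, ?_⟩
    simp only [SimpleGraph.fromEdgeSet_adj, Set.mem_singleton_iff, Sym2.eq, Sym2.rel_iff',
      Prod.mk.injEq, Prod.swap_prod_mk]
    tauto
  exact h1.reachable.trans h2.reachable

/-- No three double-labeled bridges sharing a common endpoint share a common label. -/
theorem stmt9 {V : Type*} (G : SimpleGraph V) (A : V → V → Prop)
    (lab : V → V → Finset ℕ)
    (hsymm : ∀ x y, lab x y = lab y x)
    (hsupp : ∀ x y, (lab x y).Nonempty → G.Adj x y)
    (hsolid : ∀ x y, x ≠ y → A x y → A y x → G.Adj x y)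
    (hreal : ∀ x y, A x y ↔ x ≠ y ∧ StrictReachable lab x y)
    (c u₁ u₂ u₃ : V) (h12 : u₁ ≠ u₂) (h13 : u₁ ≠ u₃) (h23 : u₂ ≠ u₃)
    (hb1 : G.IsBridge s(c, u₁)) (hb2 : G.IsBridge s(c, u₂)) (hb3 : G.IsBridge s(c, u₃))
    (hc1 : (lab c u₁).card = 2) (hc2 : (lab c u₂).card = 2) (hc3 : (lab c u₃).card = 2) :
    ¬ ∃ p : ℕ, p ∈ lab c u₁ ∧ p ∈ lab c u₂ ∧ p ∈ lab c u₃ := by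
  rintro ⟨p, hp1, hp2, hp3⟩
  obtain ⟨q₁, hq1, hq1p⟩ := Finset.exists_mem_ne (by omega) p (s := lab c u₁)
  obtain ⟨q₂, hq2, hq2p⟩ := Finset.exists_mem_ne (by omega) p (s := lab c u₂)
  obtain ⟨q₃, hq3, hq3p⟩ := Finset.exists_mem_ne (by omega) p (s := lab c u₃)
  have hA1 : G.Adj c u₁ := hsupp c u₁ ⟨p, hp1⟩
  have hA2 : G.Adj c u₂ := hsupp c u₂ ⟨p, hp2⟩
  have hA3 : G.Adj c u₃ := hsupp c u₃ ⟨p, hp3⟩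
  -- two second labels on the same side of p give a solid edge
  have solid : ∀ u v q q', u ≠ v → q ∈ lab c u → q' ∈ lab c v →
      p ∈ lab c u → p ∈ lab c v →
      ((p < q ∧ p < q') ∨ (q < p ∧ q' < p)) → G.Adj u v := by
    intro u v q q' huv hq hq' hpu hpv hcase
    have hAuv : A u v := by
      rw [hreal]
      refine ⟨huv, ?_⟩
      rcases hcase with ⟨h1, h2⟩ | ⟨h1, h2⟩
      · exact ⟨q', SReach.cons (SReach.single (by rwa [hsymm])) hq' h2⟩
      · exact ⟨p, SReach.cons (SReach.single (by rwa [hsymm] at hq)) hpv h1⟩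
    have hAvu : A v u := by
      rw [hreal]
      refine ⟨huv.symm, ?_⟩
      rcases hcase with ⟨h1, h2⟩ | ⟨h1, h2⟩
      · exact ⟨q, SReach.cons (SReach.single (by rwa [hsymm])) hq h1⟩
      · exact ⟨p, SReach.cons (SReach.single (by rwa [hsymm] at hq')) hpu h2⟩
    exact hsolid u v huv hAuv hAvu
  have contra : ∀ u v : V, u ≠ v → G.IsBridge s(c, u) → G.Adj c v → G.Adj v u → False := by
    intro u v huv hb hcv hvu
    exact bridge_contra G hb hcv hvu (Ne.symm huv) hcv.ne'
  rcases lt_or_gt_of_ne hq1p with h1 | h1 <;>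
    rcases lt_or_gt_of_ne hq2p with h2 | h2 <;>
      rcases lt_or_gt_of_ne hq3p with h3 | h3
  · exact contra u₁ u₂ h12 hb1 hA2 (solid u₁ u₂ q₁ q₂ h12 hq1 hq2 hp1 hp2 (Or.inr ⟨h1, h2⟩)).symm
  · exact contra u₁ u₂ h12 hb1 hA2 (solid u₁ u₂ q₁ q₂ h12 hq1 hq2 hp1 hp2 (Or.inr ⟨h1, h2⟩)).symm
  · exact contra u₁ u₃ h13 hb1 hA3 (solid u₁ u₃ q₁ q₃ h13 hq1 hq3 hp1 hp3 (Or.inr ⟨h1, h3⟩)).symm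
  · exact contra u₂ u₃ h23 hb2 hA3 (solid u₂ u₃ q₂ q₃ h23 hq2 hq3 hp2 hp3 (Or.inl ⟨h2, h3⟩)).symm
  · exact contra u₂ u₃ h23 hb2 hA3 (solid u₂ u₃ q₂ q₃ h23 hq2 hq3 hp2 hp3 (Or.inr ⟨h2, h3⟩)).symm
  · exact contra u₁ u₃ h13 hb1 hA3 (solid u₁ u₃ q₁ q₃ h13 hq1 hq3 hp1 hp3 (Or.inl ⟨h1, h3⟩)).symm
  · exact contra u₁ u₂ h12 hb1 hA2 (solid u₁ u₂ q₁ q₂ h12 hq1 hq2 hp1 hp2 (Or.inl ⟨h1, h2⟩)).symm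
  · exact contra u₁ u₂ h12 hb1 hA2 (solid u₁ u₂ q₁ q₂ h12 hq1 hq2 hp1 hp2 (Or.inl ⟨h1, h2⟩)).symm
end

section
/- Consider realizing a directed graph D via non-strict temporal paths (or via a proper labeling) on an undirected temporal graph. Let v and w be two vertices that, in the solid graph G of D, each have degree 1 and are both adjacent to the same vertex u, and suppose (v,w) ∉ A and (w,v) ∉ A. Then D is not realizable: there is no undirected temporal graph whose non-strict reachability relation equals A (and no proper labeling realizing A). -/
section

variable {V : Type*} {lab : V → V → Finset ℕ} {u v w z : V} {t : ℕ}

theorem NSReach.exists_lab_nonempty (h : NSReach lab v z t) : ∃ y, (lab v y).Nonempty := by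
  induction h with
  | single h => exact ⟨_, _, h⟩
  | cons _ _ _ ih => exact ih

theorem SReach.exists_lab_nonempty (h : SReach lab v z t) : ∃ y, (lab v y).Nonempty := by
  induction h with
  | single h => exact ⟨_, _, h⟩
  | cons _ _ _ ih => exact ih

theorem NonStrictReachable.lab_nonempty_of_pendant (hpend : ∀ y, (lab v y).Nonempty → y = u)
    (h : NonStrictReachable lab v z) : (lab v u).Nonempty := by
  obtain ⟨_, h⟩ := h
  obtain ⟨y, hy⟩ := h.exists_lab_nonempty
  rwa [← hpend y hy]

theorem StrictReachable.lab_nonempty_of_pendant (hpend : ∀ y, (lab v y).Nonempty → y = u)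
    (h : StrictReachable lab v z) : (lab v u).Nonempty := by
  obtain ⟨_, h⟩ := h
  obtain ⟨y, hy⟩ := h.exists_lab_nonempty
  rwa [← hpend y hy]

theorem nonStrictReachable_or_of_lab_nonempty (hsym : ∀ x y, lab x y = lab y x)
    (hv : (lab v u).Nonempty) (hw : (lab w u).Nonempty) :
    NonStrictReachable lab v w ∨ NonStrictReachable lab w v := by
  obtain ⟨s, hs⟩ := hv
  obtain ⟨s', hs'⟩ := hw
  rcases le_total s s' with hle | hle
  · exact .inl ⟨s', .cons (.single hs) (hsym w u ▸ hs') hle⟩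
  · exact .inr ⟨s, .cons (.single hs') (hsym v u ▸ hs) hle⟩

theorem strictReachable_or_of_lab_nonempty (hsym : ∀ x y, lab x y = lab y x)
    (hproper : ∀ x y z t, t ∈ lab x y → t ∈ lab x z → y = z) (hvw : v ≠ w)
    (hv : (lab v u).Nonempty) (hw : (lab w u).Nonempty) :
    StrictReachable lab v w ∨ StrictReachable lab w v := by
  obtain ⟨s, hs⟩ := hv
  obtain ⟨s', hs'⟩ := hw
  have hne : s ≠ s' := fun h => hvw (hproper u v w s (hsym v u ▸ hs) (hsym w u ▸ h ▸ hs'))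
  rcases hne.lt_or_gt with hlt | hlt
  · exact .inl ⟨s', .cons (.single hs) (hsym w u ▸ hs') hlt⟩
  · exact .inr ⟨s, .cons (.single hs') (hsym v u ▸ hs) hlt⟩

end

/-- If two pendant vertices `v, w` of the solid graph are both attached to the same vertex `u`
and no arc joins `v` and `w`, then `D` is not realizable non-strictly, nor by a proper
labeling (with strict reachability). -/
theorem stmt10 {V : Type*} (A : V → V → Prop)
    (u v w : V) (hvw : v ≠ w)
    (hvu : v ≠ u ∧ A v u ∧ A u v)
    (hwu : w ≠ u ∧ A w u ∧ A u w)
    (hdegv : ∀ x, (v ≠ x ∧ A v x ∧ A x v) → x = u)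
    (hdegw : ∀ x, (w ≠ x ∧ A w x ∧ A x w) → x = u)
    (hnA : ¬ A v w) (hnA' : ¬ A w v) :
    (¬ ∃ lab : V → V → Finset ℕ,
        (∀ x y, lab x y = lab y x) ∧
        (∀ x y, (lab x y).Nonempty → (x ≠ y ∧ A x y ∧ A y x)) ∧
        (∀ x y, A x y ↔ x ≠ y ∧ NonStrictReachable lab x y)) ∧
    (¬ ∃ lab : V → V → Finset ℕ,
        (∀ x y, lab x y = lab y x) ∧
        (∀ x y, (lab x y).Nonempty → (x ≠ y ∧ A x y ∧ A y x)) ∧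
        (∀ x y z t, t ∈ lab x y → t ∈ lab x z → y = z) ∧
        (∀ x y, A x y ↔ x ≠ y ∧ StrictReachable lab x y)) := by
  constructor
  · rintro ⟨lab, hsym, hsolid, hA⟩
    have hv := ((hA v u).1 hvu.2.1).2.lab_nonempty_of_pendant fun y hy => hdegv y (hsolid v y hy)
    have hw := ((hA w u).1 hwu.2.1).2.lab_nonempty_of_pendant fun y hy => hdegw y (hsolid w y hy)
    rcases nonStrictReachable_or_of_lab_nonempty hsym hv hw with h | h
    exacts [hnA ((hA v w).2 ⟨hvw, h⟩), hnA' ((hA w v).2 ⟨hvw.symm, h⟩)]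
  · rintro ⟨lab, hsym, hsolid, hproper, hA⟩
    have hv := ((hA v u).1 hvu.2.1).2.lab_nonempty_of_pendant fun y hy => hdegv y (hsolid v y hy)
    have hw := ((hA w u).1 hwu.2.1).2.lab_nonempty_of_pendant fun y hy => hdegw y (hsolid w y hy)
    rcases strictReachable_or_of_lab_nonempty hsym hproper hvw hv hw with h | h
    exacts [hnA ((hA v w).2 ⟨hvw, h⟩), hnA' ((hA w v).2 ⟨hvw.symm, h⟩)]
end

section
/- Let (G, λ) be an undirected temporal graph realizing a directed graph D via strict temporal paths, and let e = {u,v} be a bridge of G separating components G_u (containing u) and G_v (containing v) after its deletion. Suppose |λ(e)| = 1 (e carries a single label). Then the reachability across e is transitive in the following sense: if a ∈ V(G_u), b ∈ V(G_v), and (a,v) ∈ A and (u,b) ∈ A, then (a,b) ∈ A. -/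
/-- Transitivity across a single-labeled bridge: if `a` (on `u`'s side) reaches `v` and
`u` reaches `b` (on `v`'s side), then `a` reaches `b`. -/
theorem stmt11 {V : Type*} (G : SimpleGraph V) (A : V → V → Prop)
    (lab : V → V → Finset ℕ)
    (hsymm : ∀ x y, lab x y = lab y x)
    (hsupp : ∀ x y, (lab x y).Nonempty → G.Adj x y)
    (hreal : ∀ x y, A x y ↔ x ≠ y ∧ StrictReachable lab x y)
    (u v : V) (hbridge : G.IsBridge s(u, v))
    (hsingle : (lab u v).card = 1)
    (a b : V)
    (ha : (G.deleteEdges {s(u, v)}).Reachable a u)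
    (hb : (G.deleteEdges {s(u, v)}).Reachable b v)
    (hav : A a v) (hub : A u b) :
    A a b := by
  classical
  obtain ⟨t₀, ht₀⟩ := Finset.card_eq_one.mp hsingle
  set G' := G.deleteEdges {s(u, v)} with hG'
  have hnr : ¬ G'.Reachable u v := SimpleGraph.isBridge_iff.mp hbridge
  have ht₀mem : t₀ ∈ lab u v := by rw [ht₀]; exact Finset.mem_singleton_self t₀
  have hadj' : ∀ {x y : V}, G.Adj x y → s(x, y) ≠ s(u, v) → G'.Adj x y := by
    intro x y hxy hne
    rw [hG', SimpleGraph.deleteEdges_adj]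
    exact ⟨hxy, by simpa using hne⟩
  have hPu : ∀ {x : V}, G'.Reachable x u → ¬ G'.Reachable x v := by
    intro x h1 h2
    exact hnr (h1.symm.trans h2)
  have hlab_adj : ∀ {x y : V} {t : ℕ}, t ∈ lab x y → G.Adj x y := by
    intro x y t h; exact hsupp x y ⟨t, h⟩
  -- claim L1: walks starting at a
  have L1 : ∀ y t, SReach lab a y t →
      G'.Reachable y u ∨
      (G'.Reachable y v ∧ t₀ ≤ t ∧ (a = u ∨ ∃ s, s < t₀ ∧ SReach lab a u s)) := by
    intro y t h
    induction h with
    | single h =>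
      rename_i y t
      by_cases he : s(a, y) = s(u, v)
      · rcases Sym2.eq_iff.mp he with ⟨h1, h2⟩ | ⟨h1, h2⟩
        · have ht' : t = t₀ := by rw [h1, h2, ht₀] at h; exact Finset.mem_singleton.mp h
          rw [h2]
          exact Or.inr ⟨SimpleGraph.Reachable.refl _, le_of_eq ht'.symm, Or.inl h1⟩
        · exact absurd ((h1 ▸ ha).symm) hnr
      · exact Or.inl (((hadj' (hlab_adj h) he).symm.reachable).trans ha)
    | cons h h' hlt ih =>
      rename_i w y s t
      by_cases he : s(w, y) = s(u, v)
      · rcases Sym2.eq_iff.mp he with ⟨h1, h2⟩ | ⟨h1, h2⟩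
        · have ht' : t = t₀ := by rw [h1, h2, ht₀] at h'; exact Finset.mem_singleton.mp h'
          rw [h2]
          rcases ih with hwP | ⟨hwQ, _, _⟩
          · exact Or.inr ⟨SimpleGraph.Reachable.refl _, le_of_eq ht'.symm,
              Or.inr ⟨s, ht' ▸ hlt, h1 ▸ h⟩⟩
          · exact absurd (h1 ▸ hwQ : G'.Reachable u v) hnr
        · rw [h2]
          exact Or.inl (SimpleGraph.Reachable.refl _)
      · rcases ih with hwP | ⟨hwQ, ht₀s, hrest⟩
        · exact Or.inl ((hadj' (hlab_adj h') he).symm.reachable.trans hwP)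
        · exact Or.inr ⟨(hadj' (hlab_adj h') he).symm.reachable.trans hwQ,
            le_trans ht₀s (le_of_lt hlt), hrest⟩
  obtain ⟨hav_ne, t₁, hav_r⟩ := (hreal a v).mp hav
  obtain ⟨hub_ne, t₂, hub_r⟩ := (hreal u b).mp hub
  have Ha : a = u ∨ ∃ s, s < t₀ ∧ SReach lab a u s := by
    rcases L1 v t₁ hav_r with hP | ⟨_, _, h⟩
    · exact absurd (SimpleGraph.Reachable.refl v) (hPu hP)
    · exact h
  have hstep : ∀ {y t}, t₀ < t → t ∈ lab v y → SReach lab a y t := by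
    intro y t ht hy
    rcases Ha with rfl | ⟨s, hs, hsr⟩
    · exact SReach.cons (SReach.single ht₀mem) hy ht
    · exact SReach.cons (SReach.cons hsr ht₀mem hs) hy ht
  -- claim L2: walks starting at u
  have L2 : ∀ y t, SReach lab u y t →
      G'.Reachable y u ∨
      (G'.Reachable y v ∧ t₀ ≤ t ∧ (y = v ∨ SReach lab a y t)) := by
    intro y t h
    induction h with
    | single h =>
      rename_i y t
      by_cases he : s(u, y) = s(u, v)
      · rcases Sym2.eq_iff.mp he with ⟨h1, h2⟩ | ⟨h1, h2⟩
        · have ht' : t = t₀ := by rw [h2, ht₀] at h; exact Finset.mem_singleton.mp h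
          rw [h2]
          exact Or.inr ⟨SimpleGraph.Reachable.refl _, le_of_eq ht'.symm, Or.inl rfl⟩
        · rw [h2]
          exact Or.inl (SimpleGraph.Reachable.refl _)
      · exact Or.inl (hadj' (hlab_adj h) he).symm.reachable
    | cons h h' hlt ih =>
      rename_i w y s t
      by_cases he : s(w, y) = s(u, v)
      · rcases Sym2.eq_iff.mp he with ⟨h1, h2⟩ | ⟨h1, h2⟩
        · have ht' : t = t₀ := by rw [h1, h2, ht₀] at h'; exact Finset.mem_singleton.mp h'
          rw [h2]
          exact Or.inr ⟨SimpleGraph.Reachable.refl _, le_of_eq ht'.symm, Or.inl rfl⟩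
        · rw [h2]
          exact Or.inl (SimpleGraph.Reachable.refl _)
      · rcases ih with hwP | ⟨hwQ, ht₀s, hrest⟩
        · exact Or.inl ((hadj' (hlab_adj h') he).symm.reachable.trans hwP)
        · refine Or.inr ⟨(hadj' (hlab_adj h') he).symm.reachable.trans hwQ,
            le_trans ht₀s (le_of_lt hlt), Or.inr ?_⟩
          rcases hrest with rfl | haw
          · exact hstep (lt_of_le_of_lt ht₀s hlt) h'
          · exact SReach.cons haw h' hlt
  have hab_ne : a ≠ b := by
    rintro rfl
    exact hPu ha hb
  rcases L2 b t₂ hub_r with hP | ⟨_, _, hrest⟩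
  · exact absurd hb (hPu hP)
  · rcases hrest with rfl | hab
    · exact hav
    · exact (hreal a b).mpr ⟨hab_ne, t₂, hab⟩
end

section
/- Let D = (V, A) be a directed graph with solid graph G, and suppose (G, λ) is an undirected temporal graph realizing D via strict temporal paths. Let v be a vertex of G and w ∈ N_G(v) a solid neighbor of v such that w has no outgoing arc in A to any other solid neighbor of v (i.e., for all x ∈ N_G(v) \ {w}, (w,x) ∉ A). Then λ({v,w}) ≠ ∅, i.e., the edge {v,w} receives at least one label in every realization. -/
theorem StrictReachable.exists_penultimate {V : Type*} {lab : V → V → Finset ℕ} {u v : V}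
    (h : StrictReachable lab u v) :
    ∃ x, (x = u ∨ StrictReachable lab u x) ∧ (lab x v).Nonempty := by
  obtain ⟨t, h⟩ := h
  cases h with
  | single hlab => exact ⟨u, .inl rfl, t, hlab⟩
  | cons hpre hlab _ => exact ⟨_, .inr ⟨_, hpre⟩, t, hlab⟩

/-- If a solid neighbor `w` of `v` has no outgoing arc to any other solid neighbor of `v`,
then the edge `{v, w}` receives at least one label in every realization. -/
theorem stmt12 {V : Type*} (G : SimpleGraph V) (A : V → V → Prop)
    (lab : V → V → Finset ℕ)
    (hG : ∀ x y, G.Adj x y ↔ x ≠ y ∧ A x y ∧ A y x)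
    (hsymm : ∀ x y, lab x y = lab y x)
    (hsupp : ∀ x y, (lab x y).Nonempty → G.Adj x y)
    (hreal : ∀ x y, A x y ↔ x ≠ y ∧ StrictReachable lab x y)
    (v w : V) (hadj : G.Adj v w)
    (hout : ∀ x, G.Adj v x → x ≠ w → ¬ A w x) :
    (lab v w).Nonempty := by
  have hAwv : A w v := ((hG v w).mp hadj).2.2
  obtain ⟨x, hx, hlab⟩ := ((hreal w v).mp hAwv).2.exists_penultimate
  by_cases hxw : x = w
  · rwa [hsymm, ← hxw]
  · have hAwx : A w x := (hreal w x).mpr ⟨Ne.symm hxw, hx.resolve_left hxw⟩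
    exact absurd hAwx (hout x (hsupp x v hlab).symm hxw)
end

section
/- Let D = (V, A) be a directed graph with solid graph G, let v ∈ V and u ∉ {v} a vertex, and let b₁, …, b_k be neighbors of v in G such that each {v, bᵢ} is a bridge, (bᵢ, bⱼ) ∈ A iff i < j, and u lies outside the component of G − {v} containing the bᵢ. If (G,λ) realizes D via strict temporal paths, then [1, k] splits into three consecutive (possibly empty) intervals I₁ < I₂ < I₃ such that (bᵢ, u) ∈ A and (u, bᵢ) ∉ A for i ∈ I₁; (bᵢ, u) ∉ A and (u, bᵢ) ∉ A for i ∈ I₂; and (u, bᵢ) ∈ A and (bᵢ, u) ∉ A for i ∈ I₃. -/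
section Aux

variable {V : Type*}

/-- Labels restricted to those strictly above a threshold `s`. -/
def labGT (lab : V → V → Finset ℕ) (s : ℕ) : V → V → Finset ℕ :=
  fun a b => (lab a b).filter (s < ·)

lemma labGT_mem {lab : V → V → Finset ℕ} {s t : ℕ} {a b : V} :
    t ∈ labGT lab s a b ↔ t ∈ lab a b ∧ s < t := Finset.mem_filter

lemma sreach_labGT_lt {lab : V → V → Finset ℕ} {s : ℕ} {x y : V} {t : ℕ}
    (h : SReach (labGT lab s) x y t) : s < t := by
  cases h with
  | single h => exact (labGT_mem.1 h).2
  | cons h h' hlt => exact (labGT_mem.1 h').2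

lemma sreach_labGT_mono {lab : V → V → Finset ℕ} {s s' : ℕ} (hss : s' ≤ s) {x y : V} {t : ℕ}
    (h : SReach (labGT lab s) x y t) : SReach (labGT lab s') x y t := by
  induction h with
  | single h =>
      exact .single (labGT_mem.2 ⟨(labGT_mem.1 h).1, lt_of_le_of_lt hss (labGT_mem.1 h).2⟩)
  | cons h h' hlt ih =>
      exact .cons ih (labGT_mem.2 ⟨(labGT_mem.1 h').1, lt_of_le_of_lt hss (labGT_mem.1 h').2⟩) hlt

lemma sreach_compose {lab : V → V → Finset ℕ} {x m : V} {r : ℕ}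
    (h1 : SReach lab x m r) {y : V} {t : ℕ} (h2 : SReach (labGT lab r) m y t) :
    SReach lab x y t := by
  induction h2 with
  | single h => exact .cons h1 (labGT_mem.1 h).1 (labGT_mem.1 h).2
  | cons h h' hlt ih => exact .cons ih (labGT_mem.1 h').1 hlt

/-- Decomposition of a strict temporal walk at the *last* crossing of the unique
cut edge `(c, d)` from the region `P` to its complement. -/
lemma split_last {lab : V → V → Finset ℕ} {P : V → Prop} {c d : V}
    (hcross : ∀ a b : V, (lab a b).Nonempty → P a → ¬ P b → a = c ∧ b = d)
    {x y : V} {t : ℕ} (h : SReach lab x y t) :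
    P x → ¬ P y → ∃ s ∈ lab c d, (y = d ∧ s = t) ∨ SReach (labGT lab s) d y t := by
  induction h with
  | @single y₀ t₀ h =>
      intro hx hy
      obtain ⟨hc, hd⟩ := hcross _ y₀ ⟨t₀, h⟩ hx hy
      exact ⟨t₀, by rw [← hc, ← hd]; exact h, Or.inl ⟨hd, rfl⟩⟩
  | @cons w₀ y₀ t₀ t₁ h h' hlt ih =>
      intro hx hy
      by_cases hw : P w₀
      · obtain ⟨hc, hd⟩ := hcross w₀ y₀ ⟨t₁, h'⟩ hw hy
        exact ⟨t₁, by rw [← hc, ← hd]; exact h', Or.inl ⟨hd, rfl⟩⟩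
      · obtain ⟨s, hs, hcase⟩ := ih hx hw
        refine ⟨s, hs, Or.inr ?_⟩
        rcases hcase with ⟨hwd, hst⟩ | hr
        · subst hst
          exact .single (labGT_mem.2 ⟨by rw [← hwd]; exact h', hlt⟩)
        · exact .cons hr (labGT_mem.2 ⟨h', lt_trans (sreach_labGT_lt hr) hlt⟩) hlt

/-- Decomposition of a strict temporal walk at the *first* crossing of the unique
cut edge `(c, d)` from the region `P` to its complement. -/
lemma split_first {lab : V → V → Finset ℕ} {P : V → Prop} {c d : V}
    (hcross : ∀ a b : V, (lab a b).Nonempty → P a → ¬ P b → a = c ∧ b = d)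
    {x y : V} {t : ℕ} (h : SReach lab x y t) :
    P x → ¬ P y → ∃ s ∈ lab c d, s ≤ t ∧ (x = c ∨ ∃ t₀, t₀ < s ∧ SReach lab x c t₀) := by
  induction h with
  | @single y₀ t₀ h =>
      intro hx hy
      obtain ⟨hc, hd⟩ := hcross _ y₀ ⟨t₀, h⟩ hx hy
      exact ⟨t₀, by rw [← hc, ← hd]; exact h, le_refl _, Or.inl hc⟩
  | @cons w₀ y₀ t₀ t₁ h h' hlt ih =>
      intro hx hy
      by_cases hw : P w₀
      · obtain ⟨hc, hd⟩ := hcross w₀ y₀ ⟨t₁, h'⟩ hw hy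
        exact ⟨t₁, by rw [← hc, ← hd]; exact h', le_refl _,
          Or.inr ⟨t₀, hlt, by rw [← hc]; exact h⟩⟩
      · obtain ⟨s, hs, hst, hcase⟩ := ih hx hw
        exact ⟨s, hs, le_trans hst (le_of_lt hlt), hcase⟩

end Aux

/-- Interval structure of reachability between a vertex `u` outside a pendant star and the
topologically ordered bridge-neighbors `b 0, …, b (k-1)` of `v`: the indices split into a
prefix reaching `u`, a middle with no arcs, and a suffix reached from `u`. -/
theorem stmt15 {V : Type*} (G : SimpleGraph V) (A : V → V → Prop)
    (lab : V → V → Finset ℕ)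
    (hG : ∀ x y, G.Adj x y ↔ x ≠ y ∧ A x y ∧ A y x)
    (hsymm : ∀ x y, lab x y = lab y x)
    (hsupp : ∀ x y, (lab x y).Nonempty → G.Adj x y)
    (hreal : ∀ x y, A x y ↔ x ≠ y ∧ StrictReachable lab x y)
    (v u : V) (huv : u ≠ v) (k : ℕ) (b : Fin k → V) (hinj : Function.Injective b)
    (hbr : ∀ i, G.IsBridge s(v, b i))
    (horder : ∀ i j : Fin k, A (b i) (b j) ↔ i < j)
    (hsep : ∀ i : Fin k, ∀ p : G.Walk u (b i), v ∈ p.support) :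
    ∃ p q : ℕ, p ≤ q ∧ q ≤ k ∧
      ∀ i : Fin k,
        ((i : ℕ) < p → A (b i) u ∧ ¬ A u (b i)) ∧
        (p ≤ (i : ℕ) → (i : ℕ) < q → ¬ A (b i) u ∧ ¬ A u (b i)) ∧
        (q ≤ (i : ℕ) → A u (b i) ∧ ¬ A (b i) u) := by
  classical
  have hreachS : ∀ x y t, SReach lab x y t → G.Reachable x y := by
    intro x y t h
    induction h with
    | single h => exact (hsupp _ _ ⟨_, h⟩).reachable
    | cons _ h' _ ih => exact ih.trans (hsupp _ _ ⟨_, h'⟩).reachable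
  have hAreach : ∀ x y, A x y → G.Reachable x y := fun x y h => by
    obtain ⟨-, t, ht⟩ := (hreal x y).1 h
    exact hreachS _ _ _ ht
  by_cases hall : ∀ i, G.Reachable v (b i)
  swap
  · push_neg at hall
    obtain ⟨i0, hi0⟩ := hall
    have hvu : ∀ i, G.Reachable u (b i) → G.Reachable v (b i) := by
      rintro i ⟨w⟩
      exact ⟨w.dropUntil v (hsep i w)⟩
    have hnone : ∀ i, ¬ A (b i) u ∧ ¬ A u (b i) := by
      intro i
      have key : G.Reachable u (b i) → False := by
        intro hr
        have hv := hvu i hr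
        apply hi0
        rcases lt_trichotomy i i0 with h | rfl | h
        · exact hv.trans (hAreach _ _ ((horder i i0).2 h))
        · exact hv
        · exact hv.trans (hAreach _ _ ((horder i0 i).2 h)).symm
      exact ⟨fun h => key (hAreach _ _ h).symm, fun h => key (hAreach _ _ h)⟩
    exact ⟨0, k, Nat.zero_le _, le_refl _, fun i => ⟨fun h => absurd h (by omega),
      fun _ _ => hnone i, fun h => absurd i.isLt (by omega)⟩⟩
  have hvb : ∀ i, G.Adj v (b i) := fun i => (hbr i).reachable_iff_adj.1 (hall i)
  have hvb_ne : ∀ i, v ≠ b i := fun i => (hvb i).ne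
  have hu_ne : ∀ i, u ≠ b i := by
    intro i h
    have hmem := hsep i ((SimpleGraph.Walk.nil : G.Walk u u).copy rfl h)
    rw [SimpleGraph.Walk.support_copy, SimpleGraph.Walk.support_nil] at hmem
    exact huv (List.mem_singleton.1 hmem).symm
  set Gi : Fin k → SimpleGraph V :=
    fun i => G \ SimpleGraph.fromEdgeSet {s(v, b i)} with hGidef
  have hnotreach : ∀ i, ¬ (Gi i).Reachable v (b i) := fun i =>
    (SimpleGraph.isBridge_iff).1 (hbr i)
  have hPbi : ∀ i, (Gi i).Reachable (b i) (b i) := fun i => SimpleGraph.Reachable.refl _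
  have hPu : ∀ i, ¬ (Gi i).Reachable u (b i) := by
    rintro i ⟨w⟩
    have hle : Gi i ≤ G := sdiff_le
    have hvmem : v ∈ (w.map (SimpleGraph.Hom.ofLE hle)).support :=
      hsep i _
    rw [SimpleGraph.Walk.support_map] at hvmem
    have hvmem' : v ∈ w.support := by
      simpa using hvmem
    exact hnotreach i ⟨w.dropUntil v hvmem'⟩
  -- crossing conditions for the bridge {v, b i}
  have hcross1 : ∀ i, ∀ a c : V, (lab a c).Nonempty →
      (Gi i).Reachable a (b i) → ¬ (Gi i).Reachable c (b i) → a = b i ∧ c = v := by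
    intro i a c hne ha hc
    have hadj : G.Adj a c := hsupp a c hne
    by_cases he : s(a, c) = s(v, b i)
    · rw [Sym2.eq_iff] at he
      rcases he with ⟨rfl, rfl⟩ | ⟨rfl, rfl⟩
      · exact absurd ha (hnotreach i)
      · exact ⟨rfl, rfl⟩
    · have hadj' : (Gi i).Adj a c := by
        rw [hGidef]
        simp only [SimpleGraph.sdiff_adj, SimpleGraph.fromEdgeSet_adj, Set.mem_singleton_iff]
        exact ⟨hadj, fun hh => he hh.1⟩
      exact absurd (hadj'.symm.reachable.trans ha) hc
  have hcross2 : ∀ i, ∀ a c : V, (lab a c).Nonempty →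
      ¬ (Gi i).Reachable a (b i) → ¬ ¬ (Gi i).Reachable c (b i) → a = v ∧ c = b i := by
    intro i a c hne ha hc
    rw [not_not] at hc
    have hadj : G.Adj a c := hsupp a c hne
    by_cases he : s(a, c) = s(v, b i)
    · rw [Sym2.eq_iff] at he
      rcases he with ⟨rfl, rfl⟩ | ⟨rfl, rfl⟩
      · exact ⟨rfl, rfl⟩
      · exact absurd (hPbi i) ha
    · have hadj' : (Gi i).Adj a c := by
        rw [hGidef]
        simp only [SimpleGraph.sdiff_adj, SimpleGraph.fromEdgeSet_adj, Set.mem_singleton_iff]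
        exact ⟨hadj, fun hh => he hh.1⟩
      exact absurd (hadj'.reachable.trans hc) ha
  -- the label sets on the bridges are nonempty
  have hlabne : ∀ i, (lab v (b i)).Nonempty := by
    intro i
    have hA : A v (b i) := ((hG v (b i)).1 (hvb i)).2.1
    obtain ⟨-, t, hreach⟩ := (hreal v (b i)).1 hA
    obtain ⟨s, hs, -⟩ := split_first (hcross2 i) hreach (hnotreach i) (not_not_intro (hPbi i))
    exact ⟨s, hs⟩
  set m : Fin k → ℕ := fun i => (lab v (b i)).min' (hlabne i) with hmdef
  set M : Fin k → ℕ := fun i => (lab v (b i)).max' (hlabne i) with hMdef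
  have hm_mem : ∀ i, m i ∈ lab v (b i) := fun i => Finset.min'_mem _ _
  have hM_mem : ∀ i, M i ∈ lab v (b i) := fun i => Finset.max'_mem _ _
  have hmM : ∀ i, m i ≤ M i := fun i => Finset.min'_le _ _ (hM_mem i)
  -- ordering of the intervals
  have horder2 : ∀ i j : Fin k, i < j → M i ≤ m j := by
    intro i j hij
    by_contra hlt
    push_neg at hlt
    have hstep1 : SReach lab (b j) v (m j) := .single (by rw [hsymm]; exact hm_mem j)
    have hreachji : SReach lab (b j) (b i) (M i) := .cons hstep1 (hM_mem i) hlt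
    have hne : b j ≠ b i := fun h => hij.ne' (hinj h)
    have hAji : A (b j) (b i) := (hreal _ _).2 ⟨hne, M i, hreachji⟩
    exact absurd ((horder j i).1 hAji) (not_lt_of_gt hij)
  -- characterization of arcs from b i to u
  have hAbu : ∀ i : Fin k, A (b i) u ↔ ∃ t, SReach (labGT lab (m i)) v u t := by
    intro i
    constructor
    · intro hA
      obtain ⟨-, t, hreach⟩ := (hreal _ _).1 hA
      obtain ⟨s, hs, hcase⟩ := split_last (hcross1 i) hreach (hPbi i) (hPu i)
      rcases hcase with ⟨h1, -⟩ | hr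
      · exact absurd h1 huv
      · have hs' : s ∈ lab v (b i) := by rw [hsymm]; exact hs
        exact ⟨t, sreach_labGT_mono (Finset.min'_le _ _ hs') hr⟩
    · rintro ⟨t, hr⟩
      have hstep : SReach lab (b i) v (m i) := .single (by rw [hsymm]; exact hm_mem i)
      exact (hreal _ _).2 ⟨(hu_ne i).symm, t, sreach_compose hstep hr⟩
  -- characterization of arcs from u to b i
  have hAub : ∀ i : Fin k, A u (b i) ↔ ∃ t₀, t₀ < M i ∧ SReach lab u v t₀ := by
    intro i
    constructor
    · intro hA
      obtain ⟨-, t, hreach⟩ := (hreal _ _).1 hA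
      obtain ⟨s, hs, -, hcase⟩ := split_first (hcross2 i) hreach (hPu i)
        (not_not_intro (hPbi i))
      rcases hcase with h1 | ⟨t₀, ht₀, hr⟩
      · exact absurd h1 huv
      · exact ⟨t₀, lt_of_lt_of_le ht₀ (Finset.le_max' _ _ hs), hr⟩
    · rintro ⟨t₀, hlt, hr⟩
      exact (hreal _ _).2 ⟨hu_ne i, M i, .cons hr (hM_mem i) hlt⟩
  -- the two arc types cannot coexist
  have hdisj : ∀ i : Fin k, ¬ (A (b i) u ∧ A u (b i)) := by
    rintro i ⟨h1, h2⟩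
    have hadj : G.Adj u (b i) := (hG u (b i)).2 ⟨hu_ne i, h2, h1⟩
    have hmem := hsep i (SimpleGraph.Walk.cons hadj SimpleGraph.Walk.nil)
    rw [SimpleGraph.Walk.support_cons, SimpleGraph.Walk.support_nil] at hmem
    rcases List.mem_cons.1 hmem with h | h
    · exact huv h.symm
    · exact hvb_ne i (List.mem_singleton.1 h)
  -- prefix and suffix closure
  have hpre : ∀ i j : Fin k, j ≤ i → A (b i) u → A (b j) u := by
    intro i j hji hA
    rcases lt_or_eq_of_le hji with hji | rfl
    · obtain ⟨t, hr⟩ := (hAbu i).1 hA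
      exact (hAbu j).2 ⟨t, sreach_labGT_mono (le_trans (hmM j) (horder2 j i hji)) hr⟩
    · exact hA
  have hsuf : ∀ i j : Fin k, i ≤ j → A u (b i) → A u (b j) := by
    intro i j hij hA
    rcases lt_or_eq_of_le hij with hij | rfl
    · obtain ⟨t₀, hlt, hr⟩ := (hAub i).1 hA
      exact (hAub j).2 ⟨t₀, lt_of_lt_of_le hlt (le_trans (horder2 i j hij) (hmM j)), hr⟩
    · exact hA
  -- assemble
  set S₁ : Finset (Fin k) := Finset.univ.filter (fun i => A (b i) u) with hS₁
  set S₃ : Finset (Fin k) := Finset.univ.filter (fun i => A u (b i)) with hS₃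
  set p : ℕ := if h : S₁.Nonempty then (S₁.max' h : ℕ) + 1 else 0 with hp
  set q : ℕ := if h : S₃.Nonempty then (S₃.min' h : ℕ) else k with hq
  have hp_iff : ∀ i : Fin k, A (b i) u ↔ (i : ℕ) < p := by
    intro i
    constructor
    · intro hA
      have hmem : i ∈ S₁ := by simp [hS₁, hA]
      have hne : S₁.Nonempty := ⟨i, hmem⟩
      rw [hp, dif_pos hne]
      exact Nat.lt_succ_of_le (Fin.le_def.1 (S₁.le_max' i hmem))
    · intro hlt
      rw [hp] at hlt
      split_ifs at hlt with hne
      · have hmax : S₁.max' hne ∈ S₁ := S₁.max'_mem hne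
        have hAm : A (b (S₁.max' hne)) u := by simpa [hS₁] using hmax
        exact hpre _ i (Fin.le_def.2 (Nat.lt_succ_iff.1 hlt)) hAm
      · omega
  have hq_iff : ∀ i : Fin k, A u (b i) ↔ q ≤ (i : ℕ) := by
    intro i
    constructor
    · intro hA
      have hmem : i ∈ S₃ := by simp [hS₃, hA]
      have hne : S₃.Nonempty := ⟨i, hmem⟩
      rw [hq, dif_pos hne]
      exact Fin.le_def.1 (S₃.min'_le i hmem)
    · intro hle
      rw [hq] at hle
      split_ifs at hle with hne
      · have hmin : S₃.min' hne ∈ S₃ := S₃.min'_mem hne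
        have hAm : A u (b (S₃.min' hne)) := by simpa [hS₃] using hmin
        exact hsuf _ i (Fin.le_def.2 hle) hAm
      · exact absurd hle (Nat.not_le.2 i.isLt)
  have hpk : p ≤ k := by
    rw [hp]
    split_ifs with hne
    · exact Nat.succ_le_of_lt (S₁.max' hne).isLt
    · exact Nat.zero_le k
  have hqk : q ≤ k := by
    rw [hq]
    split_ifs with hne
    · exact le_of_lt (S₃.min' hne).isLt
    · exact le_refl k
  have hpq : p ≤ q := by
    by_contra hc
    push_neg at hc
    have hqlt : q < k := lt_of_lt_of_le hc hpk
    have h3 : A u (b ⟨q, hqlt⟩) := (hq_iff ⟨q, hqlt⟩).2 (le_refl q)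
    have h1 : A (b ⟨q, hqlt⟩) u := (hp_iff ⟨q, hqlt⟩).2 hc
    exact hdisj ⟨q, hqlt⟩ ⟨h1, h3⟩
  refine ⟨p, q, hpq, hqk, fun i => ⟨fun hip => ⟨(hp_iff i).2 hip,
      fun hA => hdisj i ⟨(hp_iff i).2 hip, hA⟩⟩,
    fun hpi hiq => ⟨fun hA => absurd ((hp_iff i).1 hA) (Nat.not_lt.2 hpi),
      fun hA => absurd ((hq_iff i).1 hA) (Nat.not_le.2 hiq)⟩,
    fun hqi => ⟨(hq_iff i).2 hqi, fun hA => hdisj i ⟨hA, (hq_iff i).2 hqi⟩⟩⟩⟩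
end

section
/- Let (G, λ) be an undirected temporal graph realizing a directed graph D = (V,A) via strict temporal paths, and let e = {u,v} be an edge of G that is not contained in any triangle of the solid graph G. If λ is minimal on e (no proper subset of λ(e) still realizes D), then |λ(e)| ≤ 2. -/
/-!
Let `a < m` be the two smallest labels of `e = {u, v}` and `b` a third one. A walk that uses `a`
on `e` can use `m` there instead: its next step after time `a` either crosses `e` again, at a time
`≥ m` (and if exactly `m`, it just returns to where it was before time `a`, so both crossings can
be dropped), or leaves through another edge at `u` or `v`. Such an edge carries no label in
`(a, b)`, since a label `c` there would give strict walks `v → u → z` (times `a < c`) and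
`z → u → v` (times `c < b`), closing a triangle of the solid graph. So every step after `a` comes
after `m`, erasing `a` keeps the reachability relation, and minimality is violated.
-/

def relabel {V : Type*} [DecidableEq V] (lab : V → V → Finset ℕ) (u v : V) (s : Finset ℕ) :
    V → V → Finset ℕ :=
  fun p q => if (p = u ∧ q = v) ∨ (p = v ∧ q = u) then s else lab p q

def Realizes {V : Type*} (lab : V → V → Finset ℕ) (A : V → V → Prop) : Prop :=
  ∀ x y, A x y ↔ x ≠ y ∧ StrictReachable lab x y

def ReachBefore {V : Type*} (lab : V → V → Finset ℕ) (x y : V) (t : ℕ) : Prop :=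
  x = y ∨ ∃ t' < t, SReach lab x y t'

section Reachability

variable {V : Type*} {lab lab' : V → V → Finset ℕ} {x y z : V} {t t' : ℕ}

theorem SReach.mono (hsub : ∀ p q, lab p q ⊆ lab' p q) (h : SReach lab x y t) :
    SReach lab' x y t := by
  induction h with
  | single h => exact .single (hsub _ _ h)
  | cons _ h' hlt ih => exact .cons ih (hsub _ _ h') hlt

theorem SReach.reachBefore (h : SReach lab x y t) (ht : t < t') : ReachBefore lab x y t' :=
  Or.inr ⟨t, ht, h⟩

theorem ReachBefore.mono (h : ReachBefore lab x y t) (ht : t ≤ t') : ReachBefore lab x y t' :=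
  h.imp_right fun ⟨s, hs, hr⟩ => ⟨s, hs.trans_le ht, hr⟩

theorem ReachBefore.sreach (h : ReachBefore lab x y t) (ht : t ∈ lab y z) : SReach lab x z t := by
  rcases h with rfl | ⟨t', ht', hr⟩
  · exact .single ht
  · exact .cons hr ht ht'

theorem ReachBefore.strictReachable (h : ReachBefore lab x y t) (hxy : x ≠ y) :
    StrictReachable lab x y := by
  obtain ⟨t', -, hr⟩ := h.resolve_left hxy
  exact ⟨t', hr⟩

end Reachability

theorem lab_eq_of_pair {V : Type*} {lab : V → V → Finset ℕ} {u v p q : V}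
    (hvu : lab v u = lab u v) (h : (p = u ∧ q = v) ∨ (p = v ∧ q = u)) :
    lab p q = lab u v := by
  rcases h with ⟨rfl, rfl⟩ | ⟨rfl, rfl⟩
  · rfl
  · exact hvu

section EraseLabel

variable {V : Type*} [DecidableEq V] {lab : V → V → Finset ℕ} {u v p q x y z o : V} {a m c : ℕ}

theorem relabel_erase_subset (hvu : lab v u = lab u v) (p q : V) :
    relabel lab u v ((lab u v).erase a) p q ⊆ lab p q := by
  unfold relabel
  split_ifs with h
  · rw [lab_eq_of_pair hvu h]
    exact Finset.erase_subset _ _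
  · exact subset_rfl

theorem mem_relabel_erase (hvu : lab v u = lab u v) (hc : c ∈ lab p q)
    (hca : ¬ (((p = u ∧ q = v) ∨ (p = v ∧ q = u)) ∧ c = a)) :
    c ∈ relabel lab u v ((lab u v).erase a) p q := by
  unfold relabel
  split_ifs with h
  · rw [← lab_eq_of_pair hvu h]
    exact Finset.mem_erase.2 ⟨fun hca' => hca ⟨h, hca'⟩, hc⟩
  · exact hc

/-- How a strict walk in `lab` arriving at `y` at time `t` is replayed once `a` is erased from
`{u, v}`: either the replay is at `y` by time `t`, or the walk has just crossed `{u, v}` from `o`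
at time `a`, and the replay crosses at time `m` instead. -/
def EraseReplay (lab : V → V → Finset ℕ) (u v : V) (a m : ℕ) (x y : V) (t : ℕ) : Prop :=
  ReachBefore (relabel lab u v ((lab u v).erase a)) x y (t + 1) ∨
    (t = a ∧ SReach (relabel lab u v ((lab u v).erase a)) x y m ∧
      ∃ o, ((y = u ∧ o = v) ∨ (y = v ∧ o = u)) ∧
        ReachBefore (relabel lab u v ((lab u v).erase a)) x o a)

theorem EraseReplay.of_reachBefore (hvu : lab v u = lab u v) (hm : m ∈ lab u v) (ham : a < m)
    (hr : ReachBefore (relabel lab u v ((lab u v).erase a)) x y c) (hc : c ∈ lab y z) :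
    EraseReplay lab u v a m x z c := by
  by_cases hcross : ((y = u ∧ z = v) ∨ (y = v ∧ z = u)) ∧ c = a
  · obtain ⟨hyz, rfl⟩ := hcross
    have hm' : m ∈ relabel lab u v ((lab u v).erase c) y z :=
      mem_relabel_erase hvu (by rwa [lab_eq_of_pair hvu hyz]) fun h => ham.ne' h.2
    exact Or.inr ⟨rfl, (hr.mono ham.le).sreach hm', y, hyz.symm.imp And.symm And.symm, hr⟩
  · exact Or.inl ((hr.sreach (mem_relabel_erase hvu hc hcross)).reachBefore (lt_add_one c))

theorem EraseReplay.of_crossed (hvu : lab v u = lab u v)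
    (hnext : ∀ c ∈ lab u v, a < c → m ≤ c)
    (hside : ∀ y z c, (y = u ∨ y = v) → ¬ ((y = u ∧ z = v) ∨ (y = v ∧ z = u)) →
      c ∈ lab y z → a < c → m < c)
    (hm : SReach (relabel lab u v ((lab u v).erase a)) x y m)
    (ho : (y = u ∧ o = v) ∨ (y = v ∧ o = u))
    (hro : ReachBefore (relabel lab u v ((lab u v).erase a)) x o a)
    (hc : c ∈ lab y z) (hac : a < c) :
    EraseReplay lab u v a m x z c := by
  have hreturn : m < c ∨ (c = m ∧ z = o) := by
    by_cases hyz : (y = u ∧ z = v) ∨ (y = v ∧ z = u)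
    · rcases (hnext c (by rwa [← lab_eq_of_pair hvu hyz]) hac).lt_or_eq with hmc | hmc
      · exact Or.inl hmc
      · exact Or.inr ⟨hmc.symm, by grind⟩
    · exact Or.inl (hside y z c (ho.imp And.left And.left) hyz hc hac)
  rcases hreturn with hmc | ⟨rfl, rfl⟩
  · exact Or.inl ((hm.cons (mem_relabel_erase hvu hc fun h => hac.ne' h.2) hmc).reachBefore
      (lt_add_one c))
  · exact Or.inl (hro.mono (by omega))

theorem SReach.eraseReplay (hvu : lab v u = lab u v) (hm : m ∈ lab u v) (ham : a < m)
    (hnext : ∀ c ∈ lab u v, a < c → m ≤ c)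
    (hside : ∀ y z c, (y = u ∨ y = v) → ¬ ((y = u ∧ z = v) ∨ (y = v ∧ z = u)) →
      c ∈ lab y z → a < c → m < c)
    {t : ℕ} (h : SReach lab x y t) : EraseReplay lab u v a m x y t := by
  induction h with
  | single hc => exact .of_reachBefore hvu hm ham (Or.inl rfl) hc
  | cons _ hc hlt ih =>
    rcases ih with hr | ⟨rfl, hm', o, ho, hro⟩
    · exact .of_reachBefore hvu hm ham (hr.mono hlt) hc
    · exact .of_crossed hvu hnext hside hm' ho hro hc hlt

theorem Realizes.relabel_erase {A : V → V → Prop} (hA : Realizes lab A)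
    (hvu : lab v u = lab u v) (hm : m ∈ lab u v) (ham : a < m)
    (hnext : ∀ c ∈ lab u v, a < c → m ≤ c)
    (hside : ∀ y z c, (y = u ∨ y = v) → ¬ ((y = u ∧ z = v) ∨ (y = v ∧ z = u)) →
      c ∈ lab y z → a < c → m < c) :
    Realizes (relabel lab u v ((lab u v).erase a)) A := by
  intro x y
  rw [hA x y]
  refine and_congr_right fun hxy => ⟨fun ⟨t, ht⟩ => ?_, fun ⟨t, ht⟩ =>
    ⟨t, ht.mono (relabel_erase_subset hvu)⟩⟩
  rcases ht.eraseReplay hvu hm ham hnext hside with hr | ⟨-, hm', -⟩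
  · exact hr.strictReachable hxy
  · exact ⟨m, hm'⟩

end EraseLabel

theorem le_of_mem_of_not_triangle {V : Type*} {G : SimpleGraph V} {A : V → V → Prop}
    {lab : V → V → Finset ℕ} (hG : ∀ x y, G.Adj x y ↔ x ≠ y ∧ A x y ∧ A y x)
    (hsymm : ∀ x y, lab x y = lab y x) (hsupp : ∀ x y, (lab x y).Nonempty → G.Adj x y)
    (hreal : Realizes lab A) {u v z : V} (hzv : z ≠ v) (hnotri : ¬ (G.Adj u z ∧ G.Adj z v))
    {a b c : ℕ} (ha : a ∈ lab u v) (hb : b ∈ lab u v) (hc : c ∈ lab u z) (hac : a < c) :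
    b ≤ c := by
  by_contra! hcb
  have hvz : A v z :=
    (hreal v z).2 ⟨hzv.symm, c, .cons (.single (by rwa [hsymm])) hc hac⟩
  have hzv' : A z v :=
    (hreal z v).2 ⟨hzv, b, .cons (.single (by rwa [hsymm])) hb hcb⟩
  exact hnotri ⟨hsupp u z ⟨c, hc⟩, (hG z v).2 ⟨hzv, hzv', hvz⟩⟩

theorem stmt17_general {V : Type*} [DecidableEq V] (G : SimpleGraph V) (A : V → V → Prop)
    (lab : V → V → Finset ℕ)
    (hG : ∀ x y, G.Adj x y ↔ x ≠ y ∧ A x y ∧ A y x)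
    (hsymm : ∀ x y, lab x y = lab y x)
    (hsupp : ∀ x y, (lab x y).Nonempty → G.Adj x y)
    (hreal : ∀ x y, A x y ↔ x ≠ y ∧ StrictReachable lab x y)
    (u v : V)
    (hnotri : ∀ x, ¬ (G.Adj u x ∧ G.Adj x v))
    (hmin : ∀ s : Finset ℕ, s ⊂ lab u v →
      ¬ ∀ x y, A x y ↔ x ≠ y ∧ StrictReachable
        (fun p q => if (p = u ∧ q = v) ∨ (p = v ∧ q = u) then s else lab p q) x y) :
    (lab u v).card ≤ 2 := by
  by_contra! hcard
  obtain ⟨a, ha, hamin⟩ := (lab u v).exists_min_image id (Finset.card_pos.1 (by omega))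
  set s := (lab u v).erase a
  have hs : 1 < s.card := by rw [Finset.card_erase_of_mem ha]; omega
  have hsne : s.Nonempty := Finset.card_pos.1 (by omega)
  obtain ⟨hma, hm⟩ := Finset.mem_erase.1 (s.min'_mem hsne)
  have hb := Finset.mem_of_mem_erase (s.max'_mem hsne)
  have hmb : s.min' hsne < s.max' hsne := s.min'_lt_max'_of_card hs
  have hside : ∀ y z c, (y = u ∨ y = v) → ¬ ((y = u ∧ z = v) ∨ (y = v ∧ z = u)) →
      c ∈ lab y z → a < c → s.min' hsne < c := by
    rintro y z c (rfl | rfl) hyz hc hac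
    · exact hmb.trans_le <| le_of_mem_of_not_triangle hG hsymm hsupp hreal
        (fun h => hyz (Or.inl ⟨rfl, h⟩)) (hnotri z) ha hb hc hac
    · exact hmb.trans_le <| le_of_mem_of_not_triangle hG hsymm hsupp hreal
        (fun h => hyz (Or.inr ⟨rfl, h⟩)) (fun h => hnotri z ⟨h.2.symm, h.1.symm⟩)
        (by rwa [hsymm]) (by rwa [hsymm]) hc hac
  exact hmin s (Finset.erase_ssubset ha) <| Realizes.relabel_erase hreal (hsymm v u) hm
    (lt_of_le_of_ne (hamin _ hm) (Ne.symm hma))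
    (fun c hc hac => s.min'_le c (Finset.mem_erase.2 ⟨hac.ne', hc⟩)) hside

/-- If `λ` is minimal on an edge `{u,v}` that lies in no triangle of the solid graph,
then that edge carries at most two labels. -/
theorem stmt17 {V : Type*} [DecidableEq V] (G : SimpleGraph V) (A : V → V → Prop)
    (lab : V → V → Finset ℕ)
    (hG : ∀ x y, G.Adj x y ↔ x ≠ y ∧ A x y ∧ A y x)
    (hsymm : ∀ x y, lab x y = lab y x)
    (hsupp : ∀ x y, (lab x y).Nonempty → G.Adj x y)
    (hreal : ∀ x y, A x y ↔ x ≠ y ∧ StrictReachable lab x y)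
    (u v : V) (hadj : G.Adj u v)
    (hnotri : ∀ x, ¬ (G.Adj u x ∧ G.Adj x v))
    (hmin : ∀ s : Finset ℕ, s ⊂ lab u v →
      ¬ ∀ x y, A x y ↔ x ≠ y ∧ StrictReachable
        (fun p q => if (p = u ∧ q = v) ∨ (p = v ∧ q = u) then s else lab p q) x y) :
    (lab u v).card ≤ 2 :=
  stmt17_general G A lab hG hsymm hsupp hreal u v hnotri hmin
end

section
/- Let (G, λ) be an undirected temporal graph realizing a directed graph D = (V,A) via strict temporal paths, let c be a vertex, and let u, w₁, w₂, v be four distinct neighbors of c in G such that all four edges {c,u}, {c,w₁}, {c,w₂}, {c,v} are bridges of G and (u,w₁), (w₁,w₂), (w₂,v) are all arcs of A. Then λ({c,u}) and λ({c,v}) are disjoint; more precisely max λ({c,u}) < min λ({c,v}). -/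
open SimpleGraph

section Aux

variable {V : Type*} {G : SimpleGraph V} {lab : V → V → Finset ℕ}

lemma aux_adj' {e : Sym2 V} {x y : V} (h : G.Adj x y) (hne : s(x, y) ≠ e) :
    (G \ fromEdgeSet {e}).Adj x y := by
  simp only [sdiff_adj, fromEdgeSet_adj, Set.mem_singleton_iff]
  exact ⟨h, fun hc => hne hc.1⟩

/-- If a labelled step leaves a vertex reachable from `w` (in `G` minus the edge `s(c,w)`)
and lands on one that is not, then the step must be the edge `s(c,w)` traversed from `w`. -/
lemma aux_cross (hsupp : ∀ x y, (lab x y).Nonempty → G.Adj x y)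
    {c w x y : V} {t : ℕ} (ht : t ∈ lab x y)
    (hx : (G \ fromEdgeSet {s(c, w)}).Reachable w x)
    (hy : ¬ (G \ fromEdgeSet {s(c, w)}).Reachable w y) :
    x = w ∧ y = c := by
  have hadj : G.Adj x y := hsupp x y ⟨t, ht⟩
  by_cases hne : s(x, y) = s(c, w)
  · rw [Sym2.eq_iff] at hne
    rcases hne with ⟨hx1, hy1⟩ | ⟨hx1, hy1⟩
    · exfalso; subst hy1; exact hy (SimpleGraph.Reachable.refl _)
    · exact ⟨hx1, hy1⟩
  · exact absurd (hx.trans (aux_adj' hadj hne).reachable) hy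

/-- Same, for a step entering the `w`-side. -/
lemma aux_cross' (hsupp : ∀ x y, (lab x y).Nonempty → G.Adj x y)
    {c w x y : V} {t : ℕ} (ht : t ∈ lab x y)
    (hx : ¬ (G \ fromEdgeSet {s(c, w)}).Reachable w x)
    (hy : (G \ fromEdgeSet {s(c, w)}).Reachable w y) :
    x = c ∧ y = w := by
  have hadj : G.Adj x y := hsupp x y ⟨t, ht⟩
  by_cases hne : s(x, y) = s(c, w)
  · rw [Sym2.eq_iff] at hne
    rcases hne with ⟨hx1, hy1⟩ | ⟨hx1, hy1⟩
    · exact ⟨hx1, hy1⟩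
    · exfalso; subst hx1; exact hx (SimpleGraph.Reachable.refl _)
  · exact absurd (hy.trans (aux_adj' hadj.symm (by rw [Sym2.eq_swap]; exact hne)).reachable) hx

/-- Exit lemma: a strict temporal walk from the `w`-side of the bridge `s(c,w)` to the
other side must use a label of `s(c,w)`, no later than its arrival time. -/
lemma aux_exit (hsymm : ∀ x y, lab x y = lab y x)
    (hsupp : ∀ x y, (lab x y).Nonempty → G.Adj x y)
    {c w p q : V} {t : ℕ} (h : SReach lab p q t)
    (hp : (G \ fromEdgeSet {s(c, w)}).Reachable w p)
    (hq : ¬ (G \ fromEdgeSet {s(c, w)}).Reachable w q) :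
    ∃ a ∈ lab c w, a ≤ t := by
  induction h with
  | single h =>
    obtain ⟨hx, hy⟩ := aux_cross hsupp h hp hq
    subst hx; subst hy
    exact ⟨_, by rwa [hsymm], le_refl _⟩
  | @cons m q s t h h' hlt ih =>
    by_cases hm : (G \ fromEdgeSet {s(c, w)}).Reachable w m
    · obtain ⟨hx, hy⟩ := aux_cross hsupp h' hm hq
      subst hx; subst hy
      exact ⟨_, by rwa [hsymm], le_refl _⟩
    · obtain ⟨a, ha, hat⟩ := ih hm
      exact ⟨a, ha, hat.trans hlt.le⟩

/-- Entry lemma: a strict temporal walk ending on the `w`-side of the bridge `s(c,w)` but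
starting outside it uses some label `b` of `s(c,w)` (at most the arrival time); moreover,
unless it starts at `c` itself, it reaches `c` strictly before time `b`. -/
lemma aux_enter (hsymm : ∀ x y, lab x y = lab y x)
    (hsupp : ∀ x y, (lab x y).Nonempty → G.Adj x y)
    {c w p q : V} {t : ℕ} (h : SReach lab p q t)
    (hp : ¬ (G \ fromEdgeSet {s(c, w)}).Reachable w p)
    (hq : (G \ fromEdgeSet {s(c, w)}).Reachable w q) :
    ∃ b ∈ lab c w, b ≤ t ∧ (p = c ∨ ∃ s, s < b ∧ SReach lab p c s) := by
  induction h with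
  | single h =>
    obtain ⟨hx, hy⟩ := aux_cross' hsupp h hp hq
    subst hx; subst hy
    exact ⟨_, h, le_refl _, Or.inl rfl⟩
  | @cons m q s t h h' hlt ih =>
    by_cases hm : (G \ fromEdgeSet {s(c, w)}).Reachable w m
    · obtain ⟨b, hb, hbt, hrest⟩ := ih hm
      exact ⟨b, hb, hbt.trans hlt.le, hrest⟩
    · obtain ⟨hx, hy⟩ := aux_cross' hsupp h' hm hq
      subst hx; subst hy
      exact ⟨_, h', le_refl _, Or.inr ⟨s, hlt, h⟩⟩

lemma aux_reach_del (hsupp : ∀ x y, (lab x y).Nonempty → G.Adj x y)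
    {c w p q : V} {t : ℕ} (hn : ¬ G.Adj c w) (h : SReach lab p q t) :
    (G \ fromEdgeSet {s(c, w)}).Reachable p q := by
  induction h with
  | @single y t h =>
    have hadj : G.Adj p y := hsupp p y ⟨t, h⟩
    refine (aux_adj' hadj ?_).reachable
    intro he
    rcases Sym2.eq_iff.1 he with ⟨rfl, rfl⟩ | ⟨rfl, rfl⟩
    exacts [hn hadj, hn hadj.symm]
  | @cons y z t t' h h' hlt ih =>
    have hadj : G.Adj y z := hsupp y z ⟨t', h'⟩
    refine ih.trans (aux_adj' hadj ?_).reachable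
    intro he
    rcases Sym2.eq_iff.1 he with ⟨rfl, rfl⟩ | ⟨rfl, rfl⟩
    exacts [hn hadj, hn hadj.symm]

end Aux

/-- For four bridges at `c` to `u, w₁, w₂, v` with the dashed path `(u, w₁, w₂, v)` in `D`,
the label sets of `{c,u}` and `{c,v}` are disjoint, and every label of `{c,u}` is strictly
below every label of `{c,v}`. -/
theorem stmt19 {V : Type*} (G : SimpleGraph V) (A : V → V → Prop)
    (lab : V → V → Finset ℕ)
    (hG : ∀ x y, G.Adj x y ↔ x ≠ y ∧ A x y ∧ A y x)
    (hsymm : ∀ x y, lab x y = lab y x)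
    (hsupp : ∀ x y, (lab x y).Nonempty → G.Adj x y)
    (hreal : ∀ x y, A x y ↔ x ≠ y ∧ StrictReachable lab x y)
    (c u w₁ w₂ v : V)
    (huw1 : u ≠ w₁) (huw2 : u ≠ w₂) (huv : u ≠ v)
    (hw12 : w₁ ≠ w₂) (hw1v : w₁ ≠ v) (hw2v : w₂ ≠ v)
    (hbu : G.IsBridge s(c, u)) (hb1 : G.IsBridge s(c, w₁))
    (hb2 : G.IsBridge s(c, w₂)) (hbv : G.IsBridge s(c, v))
    (ha1 : A u w₁) (ha2 : A w₁ w₂) (ha3 : A w₂ v) :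
    Disjoint (lab c u) (lab c v) ∧ ∀ s ∈ lab c u, ∀ r ∈ lab c v, s < r := by
  rw [SimpleGraph.isBridge_iff] at hbu hb1 hb2 hbv
  by_cases hnu : (lab c u).Nonempty
  swap
  · rw [Finset.not_nonempty_iff_eq_empty] at hnu
    simp [hnu]
  by_cases hnv : (lab c v).Nonempty
  swap
  · rw [Finset.not_nonempty_iff_eq_empty] at hnv
    simp [hnv]
  have hau : G.Adj c u := hsupp c u hnu
  have hav : G.Adj c v := hsupp c v hnv
  have hru : ¬ (G \ fromEdgeSet {s(c, u)}).Reachable c u := hbu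
  have hr1 : ¬ (G \ fromEdgeSet {s(c, w₁)}).Reachable c w₁ := hb1
  have hr2 : ¬ (G \ fromEdgeSet {s(c, w₂)}).Reachable c w₂ := hb2
  have hrv : ¬ (G \ fromEdgeSet {s(c, v)}).Reachable c v := hbv
  obtain ⟨T1, hT1⟩ := ((hreal u w₁).1 ha1).2
  obtain ⟨T2, hT2⟩ := ((hreal w₁ w₂).1 ha2).2
  have ha1' : G.Adj c w₁ := by
    by_contra hn
    refine hr1 ((aux_adj' hau ?_).reachable.trans (aux_reach_del hsupp hn hT1))
    rw [Ne, Sym2.eq_iff]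
    rintro (⟨h1, h2⟩ | ⟨h1, h2⟩)
    exacts [huw1 h2, huw1 (h2.trans h1)]
  have ha2' : G.Adj c w₂ := by
    by_contra hn
    refine hr2 ((aux_adj' hau ?_).reachable.trans
      ((aux_reach_del hsupp hn hT1).trans (aux_reach_del hsupp hn hT2)))
    rw [Ne, Sym2.eq_iff]
    rintro (⟨h1, h2⟩ | ⟨h1, h2⟩)
    exacts [huw2 h2, huw2 (h2.trans h1)]
  have hcu : c ≠ u := hau.ne
  have hcw1 : c ≠ w₁ := ha1'.ne
  have hcw2 : c ≠ w₂ := ha2'.ne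
  have hcv : c ≠ v := hav.ne
  -- ¬ G.Adj u w₁ (else c–u–w₁ is a path around the bridge s(c,w₁))
  have hnadj1 : ¬ G.Adj u w₁ := by
    intro hadj
    refine hr1 (SimpleGraph.Reachable.trans
      (aux_adj' hau ?_).reachable (aux_adj' hadj ?_).reachable)
    · rw [Ne, Sym2.eq_iff]
      rintro (⟨h1, h2⟩ | ⟨h1, h2⟩) <;> simp_all
    · rw [Ne, Sym2.eq_iff]
      rintro (⟨h1, h2⟩ | ⟨h1, h2⟩) <;> simp_all
  -- ¬ G.Adj w₂ v (else c–w₂–v is a path around the bridge s(c,v))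
  have hnadj2 : ¬ G.Adj w₂ v := by
    intro hadj
    refine hrv (SimpleGraph.Reachable.trans
      (aux_adj' ha2' ?_).reachable (aux_adj' hadj ?_).reachable)
    · rw [Ne, Sym2.eq_iff]
      rintro (⟨h1, h2⟩ | ⟨h1, h2⟩) <;> simp_all
    · rw [Ne, Sym2.eq_iff]
      rintro (⟨h1, h2⟩ | ⟨h1, h2⟩) <;> simp_all
  -- hence no reverse arcs
  have hnA1 : ¬ A w₁ u := fun hA => hnadj1 ((hG u w₁).2 ⟨huw1, ha1, hA⟩)
  have hnA2 : ¬ A v w₂ := fun hA => hnadj2 ((hG w₂ v).2 ⟨hw2v, ha3, hA⟩)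
  -- every label of {c,u} is ≤ every label of {c,w₁}
  have hle1 : ∀ t ∈ lab c u, ∀ a ∈ lab c w₁, t ≤ a := by
    intro t ht a ha
    by_contra hlt
    push_neg at hlt
    exact hnA1 ((hreal w₁ u).2 ⟨huw1.symm,
      t, SReach.cons (SReach.single (by rwa [hsymm])) ht hlt⟩)
  -- every label of {c,w₂} is ≤ every label of {c,v}
  have hle2 : ∀ b ∈ lab c w₂, ∀ r ∈ lab c v, b ≤ r := by
    intro b hb r hr
    by_contra hlt
    push_neg at hlt
    exact hnA2 ((hreal v w₂).2 ⟨hw2v.symm,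
      b, SReach.cons (SReach.single (by rwa [hsymm])) hb hlt⟩)
  -- from the arc w₁ → w₂ get a ∈ lab c w₁, b ∈ lab c w₂ with a < b
  obtain ⟨T, hT⟩ := ((hreal w₁ w₂).1 ha2).2
  have hp2 : ¬ (G \ SimpleGraph.fromEdgeSet {s(c, w₂)}).Reachable w₂ w₁ := by
    intro hreach
    refine hr2 ((hreach.trans (aux_adj' ha1'.symm ?_).reachable).symm)
    rw [Ne, Sym2.eq_iff]
    rintro (⟨h1, h2⟩ | ⟨h1, h2⟩) <;> simp_all
  obtain ⟨b, hb, _, hcase⟩ := aux_enter hsymm hsupp hT hp2 (SimpleGraph.Reachable.refl _)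
  rcases hcase with hc1 | ⟨s, hsb, hs⟩
  · exact absurd hc1.symm hcw1
  have hq1 : ¬ (G \ SimpleGraph.fromEdgeSet {s(c, w₁)}).Reachable w₁ c := fun h => hr1 h.symm
  obtain ⟨a, ha, has⟩ := aux_exit hsymm hsupp hs (SimpleGraph.Reachable.refl _) hq1
  have hab : a < b := lt_of_le_of_lt has hsb
  have key : ∀ t ∈ lab c u, ∀ r ∈ lab c v, t < r := fun t ht r hr =>
    lt_of_le_of_lt (hle1 t ht a ha) (lt_of_lt_of_le hab (hle2 b hb r hr))
  refine ⟨Finset.disjoint_left.2 fun t ht htv => lt_irrefl t (key t ht t htv), key⟩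
end
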